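/- arXiv:1102.4980 — 6 statements merged into one kernel-verified Lean document; each statement's English description precedes it below -/
import Mathlib

section
/- If G is a simple graph which is a cycle (of length n ≥ 3), then χ'_g(G) = χ'_gl(G) = 3. -/
open SimpleGraph

/-- `G` is `A`-colorable for the Abelian group `A`: for every "oriented weight" `f` on the
edges (encoded as an antisymmetric function on ordered pairs, which is equivalent to fixing an
orientation `D` of `E(G)` and a function `E(G) → A`), there is an `(A,f)`-coloring, i.e. a
vertex coloring `c : V → A` with `c u - c v ≠ f u v` for every edge oriented from `u` to `v`. -/
def IsGroupColorable {V : Type*} (G : SimpleGraph V) (A : Type) [AddCommGroup A] : Prop :=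
  ∀ f : V → V → A, (∀ u v, f v u = - f u v) →
    ∃ c : V → A, ∀ u v, G.Adj u v → c u - c v ≠ f u v

/-- The group chromatic number `χ_g(G)`: the least `m` such that `G` is `A`-colorable for
every Abelian group `A` of order at least `m`. -/
noncomputable def groupChromaticNumber {V : Type*} (G : SimpleGraph V) : ℕ :=
  sInf {m : ℕ | ∀ (A : Type) [AddCommGroup A] [Fintype A],
    m ≤ Fintype.card A → IsGroupColorable G A}

/-- `G` is group `k`-choosable: for every Abelian group `A` of order at least `k`, every
`k`-uniform list assignment `L`, and every antisymmetric edge weight `f` (i.e. an orientation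
together with a function `E(G) → A`), there is an `(A,L,f)`-coloring. -/
def IsGroupChoosable {V : Type*} (G : SimpleGraph V) (k : ℕ) : Prop :=
  ∀ (A : Type) [AddCommGroup A] [Fintype A], k ≤ Fintype.card A →
    ∀ L : V → Finset A, (∀ v, (L v).card = k) →
      ∀ f : V → V → A, (∀ u v, f v u = - f u v) →
        ∃ c : V → A, (∀ v, c v ∈ L v) ∧ ∀ u v, G.Adj u v → c u - c v ≠ f u v

/-- The group choice number `χ_gl(G)`: the least `k` such that `G` is group `k`-choosable. -/
noncomputable def groupChoiceNumber {V : Type*} (G : SimpleGraph V) : ℕ :=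
  sInf {k : ℕ | IsGroupChoosable G k}

/-- `G` is group `k`-edge-choosable iff its line graph is group `k`-choosable. -/
def IsGroupEdgeChoosable {V : Type*} (G : SimpleGraph V) (k : ℕ) : Prop :=
  IsGroupChoosable G.lineGraph k

/-- The group edge chromatic number `χ'_g(G) = χ_g(𝓛(G))`. -/
noncomputable def groupEdgeChromaticNumber {V : Type*} (G : SimpleGraph V) : ℕ :=
  groupChromaticNumber G.lineGraph

/-- The group edge choice number `χ'_gl(G) = χ_gl(𝓛(G))`. -/
noncomputable def groupEdgeChoiceNumber {V : Type*} (G : SimpleGraph V) : ℕ :=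
  groupChoiceNumber G.lineGraph

/-- `G` is a cycle (of some length `n ≥ 3`). -/
def IsCycleGraph {V : Type*} (G : SimpleGraph V) : Prop :=
  ∃ n : ℕ, 3 ≤ n ∧ Nonempty (G ≃g cycleGraph n)

/-!
The line graph of the cycle `C_n` is again `C_n`, so both numbers are those of `C_n`. Every
vertex of `C_n` has degree 2, so colouring greedily from lists of size 3 always leaves a value
that is not forbidden by the (at most two) neighbours coloured before: `χ_gl(C_n) ≤ 3`.
Conversely, in `ℤ/2` the condition `c u - c v ≠ f(uv)` forces `c u - c v = f(uv) + 1`; summed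
around the cycle this gives `0 = Σ f + n`, which fails as soon as `Σ f ≠ n`. So `C_n` is not
`ℤ/2`-colourable, `χ_g(C_n) ≥ 3`, and as list colourability implies colourability, both numbers
are 3.
-/

theorem Fin.add_one_add_one_ne_self {m : ℕ} (i : Fin (m + 3)) : i + 1 + 1 ≠ i := by
  rw [add_assoc, Ne, add_eq_left, Fin.ext_iff, Fin.val_add, Fin.val_one, Fin.val_zero,
    Nat.mod_eq_of_lt] <;> omega

theorem Fin.sym2_mk_add_one_inj {m : ℕ} {i j : Fin (m + 3)} :
    s(i, i + 1) = s(j, j + 1) ↔ i = j := by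
  refine ⟨fun h => ?_, fun h => h ▸ rfl⟩
  rcases Sym2.eq_iff.1 h with ⟨hij, -⟩ | ⟨hij, hji⟩
  · exact hij
  · exact absurd (by rw [← hij, hji]) (Fin.add_one_add_one_ne_self j)

namespace SimpleGraph

variable {V W : Type*} {G : SimpleGraph V} {H : SimpleGraph W}

theorem IsGroupColorable.of_iso (e : G ≃g H) {A : Type} [AddCommGroup A]
    (h : IsGroupColorable H A) : IsGroupColorable G A := by
  intro f hf
  obtain ⟨c, hc⟩ := h (fun x y => f (e.symm x) (e.symm y)) fun x y => hf _ _
  refine ⟨c ∘ e, fun u v huv => ?_⟩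
  simpa using hc (e u) (e v) (e.map_adj_iff.mpr huv)

theorem IsGroupChoosable.of_iso (e : G ≃g H) {k : ℕ} (h : IsGroupChoosable H k) :
    IsGroupChoosable G k := by
  intro A _ _ hA L hL f hf
  obtain ⟨c, hcL, hc⟩ := h A hA (L ∘ e.symm) (fun _ => hL _)
    (fun x y => f (e.symm x) (e.symm y)) fun x y => hf _ _
  refine ⟨c ∘ e, fun v => by simpa using hcL (e v), fun u v huv => ?_⟩
  simpa using hc (e u) (e v) (e.map_adj_iff.mpr huv)

theorem groupChromaticNumber_congr (e : G ≃g H) :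
    groupChromaticNumber G = groupChromaticNumber H := by
  unfold groupChromaticNumber
  congr! 6 with m A _ _ _
  exact imp_congr_right fun _ => ⟨.of_iso e.symm, .of_iso e⟩

theorem groupChoiceNumber_congr (e : G ≃g H) : groupChoiceNumber G = groupChoiceNumber H := by
  unfold groupChoiceNumber
  congr 1 with k
  exact ⟨.of_iso e.symm, .of_iso e⟩

theorem exists_mem_forall_adj_update_sub_ne [DecidableEq V] [G.LocallyFinite] {A : Type}
    [AddCommGroup A] {f : V → V → A} (hf : ∀ u v, f v u = -f u v) {L : V → Finset A} {a : V}
    (ha : G.degree a < (L a).card) {s : Finset V} (has : a ∉ s) {c : V → A}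
    (hc : ∀ u ∈ s, ∀ v ∈ s, G.Adj u v → c u - c v ≠ f u v) :
    ∃ x ∈ L a, ∀ u ∈ insert a s, ∀ v ∈ insert a s, G.Adj u v →
      Function.update c a x u - Function.update c a x v ≠ f u v := by
  classical
  set forbidden := (s.filter (G.Adj a)).image fun v => c v + f a v
  have hforbidden : forbidden.card < (L a).card := by
    refine Finset.card_image_le.trans_lt (lt_of_le_of_lt (Finset.card_le_card fun v hv => ?_) ha)
    exact (mem_neighborFinset G a v).2 (Finset.mem_filter.1 hv).2
  obtain ⟨x, hxL, hx⟩ := Finset.exists_mem_notMem_of_card_lt_card hforbidden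
  have hxa : ∀ v ∈ s, G.Adj a v → x - c v ≠ f a v := fun v hv hav h =>
    hx (Finset.mem_image.2 ⟨v, Finset.mem_filter.2 ⟨hv, hav⟩, by rw [← h, add_sub_cancel]⟩)
  have hupd : ∀ v ∈ s, Function.update c a x v = c v := fun v hv =>
    Function.update_of_ne (ne_of_mem_of_not_mem hv has) _ _
  refine ⟨x, hxL, ?_⟩
  simp only [Finset.mem_insert, forall_eq_or_imp, Function.update_self]
  refine ⟨⟨fun haa => (G.irrefl haa).elim, fun v hv hav => ?_⟩,
    fun u hu => ⟨fun hua => ?_, fun v hv huv => ?_⟩⟩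
  · rw [hupd v hv]
    exact hxa v hv hav
  · rw [hupd u hu, hf a u, ← neg_sub, ne_eq, neg_inj]
    exact hxa u hu hua.symm
  · rw [hupd u hu, hupd v hv]
    exact hc u hu v hv huv

theorem isGroupChoosable_of_forall_degree_lt [Finite V] [G.LocallyFinite] {k : ℕ}
    (hdeg : ∀ v, G.degree v < k) : IsGroupChoosable G k := by
  classical
  have := Fintype.ofFinite V
  intro A _ _ _ L hL f hf
  suffices ∀ s : Finset V, ∃ c : V → A, (∀ v, c v ∈ L v) ∧
      ∀ u ∈ s, ∀ v ∈ s, G.Adj u v → c u - c v ≠ f u v by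
    simpa using this Finset.univ
  intro s
  induction s using Finset.induction_on with
  | empty =>
    choose c hc using fun v => Finset.card_pos.1 ((hL v).symm ▸ (hdeg v).trans_le' (Nat.zero_le _))
    exact ⟨c, hc, by simp⟩
  | insert a s has ih =>
    obtain ⟨c, hcL, hc⟩ := ih
    obtain ⟨x, hxL, hx⟩ := exists_mem_forall_adj_update_sub_ne hf ((hL a).symm ▸ hdeg a) has hc
    exact ⟨_, (Function.forall_update_iff c fun v y => y ∈ L v).2 ⟨hxL, fun v _ => hcL v⟩, hx⟩

section Numbers

theorem IsGroupChoosable.mono {k l : ℕ} (h : IsGroupChoosable G k) (hkl : k ≤ l) :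
    IsGroupChoosable G l := by
  intro A _ _ hA L hL f hf
  choose L' hL'L hL' using fun v => Finset.exists_subset_card_eq (hkl.trans (hL v).ge)
  obtain ⟨c, hcL', hc⟩ := h A (hkl.trans hA) L' hL' f hf
  exact ⟨c, fun v => hL'L v (hcL' v), hc⟩

theorem IsGroupChoosable.isGroupColorable {k : ℕ} (h : IsGroupChoosable G k) {A : Type}
    [AddCommGroup A] [Fintype A] (hA : k ≤ Fintype.card A) : IsGroupColorable G A := by
  intro f hf
  obtain ⟨S, -, hS⟩ := Finset.exists_subset_card_eq (s := (Finset.univ : Finset A)) hA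
  obtain ⟨c, -, hc⟩ := h A hA (fun _ => S) (fun _ => hS) f hf
  exact ⟨c, hc⟩

variable {A : Type} [AddCommGroup A] [Fintype A]

theorem groupChromaticNumber_eq_of_isGroupChoosable
    (hG : IsGroupChoosable G (Fintype.card A + 1)) (hA : ¬ IsGroupColorable G A) :
    groupChromaticNumber G = Fintype.card A + 1 := by
  unfold groupChromaticNumber
  refine (Nat.sInf_upward_closed_eq_succ_iff ?_ _).2
    ⟨fun _ _ _ hB => hG.isGroupColorable hB, fun h => hA (h A le_rfl)⟩
  exact fun _ _ hml hm B _ _ hB => hm B (hml.trans hB)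

theorem groupChoiceNumber_eq_of_isGroupChoosable
    (hG : IsGroupChoosable G (Fintype.card A + 1)) (hA : ¬ IsGroupColorable G A) :
    groupChoiceNumber G = Fintype.card A + 1 :=
  (Nat.sInf_upward_closed_eq_succ_iff (fun _ _ hkl hk => hk.mono hkl) _).2
    ⟨hG, fun h => hA (h.isGroupColorable le_rfl)⟩

end Numbers

section Cycle

variable {m : ℕ}

theorem cycleGraph_adj_iff_eq_add_one {i j : Fin (m + 3)} :
    (cycleGraph (m + 3)).Adj i j ↔ i = j + 1 ∨ j = i + 1 := by
  rw [cycleGraph_adj, sub_eq_iff_eq_add', sub_eq_iff_eq_add']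

def cycleGraphEdge (i : Fin (m + 3)) : (cycleGraph (m + 3)).edgeSet :=
  ⟨s(i, i + 1), cycleGraph_adj_iff_eq_add_one.2 (Or.inr rfl)⟩

theorem cycleGraphEdge_bijective : Function.Bijective (cycleGraphEdge (m := m)) := by
  refine ⟨fun i j h => Fin.sym2_mk_add_one_inj.1 (congrArg Subtype.val h), ?_⟩
  rintro ⟨e, he⟩
  induction e using Sym2.ind with
  | _ u v =>
    obtain rfl | rfl : u = v + 1 ∨ v = u + 1 := cycleGraph_adj_iff_eq_add_one.1 he
    · exact ⟨v, Subtype.ext Sym2.eq_swap⟩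
    · exact ⟨u, rfl⟩

theorem lineGraph_adj_cycleGraphEdge {i j : Fin (m + 3)} :
    (cycleGraph (m + 3)).lineGraph.Adj (cycleGraphEdge i) (cycleGraphEdge j) ↔
      (cycleGraph (m + 3)).Adj i j := by
  rw [lineGraph_adj_iff_exists, cycleGraphEdge_bijective.1.ne_iff, cycleGraph_adj_iff_eq_add_one]
  have hi : i + 1 ≠ i := by simp
  have hj : j + 1 ≠ j := by simp
  simp only [ne_eq, cycleGraphEdge, Sym2.mem_iff, exists_eq_or_imp, ↓existsAndEq, add_left_inj,
    true_and]
  grind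

noncomputable def cycleGraphIsoLineGraph :
    cycleGraph (m + 3) ≃g (cycleGraph (m + 3)).lineGraph where
  toEquiv := .ofBijective _ cycleGraphEdge_bijective
  map_rel_iff' := lineGraph_adj_cycleGraphEdge

theorem cycleGraph_isGroupChoosable_three : IsGroupChoosable (cycleGraph (m + 3)) 3 :=
  isGroupChoosable_of_forall_degree_lt fun _ => cycleGraph_degree_three_le.trans_lt (by norm_num)

theorem cycleGraph_not_isGroupColorable_zmod_two :
    ¬ IsGroupColorable (cycleGraph (m + 3)) (ZMod 2) := by
  classical
  have eq_add_one_of_ne : ∀ {a b : ZMod 2}, a ≠ b → a = b + 1 := by decide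
  have add_add_three_ne_zero : ∀ x : ZMod 2, x + (x + 3) ≠ 0 := by decide
  intro h
  -- weight `m ≡ (m + 3) + 1` on the single edge `s(0, 1)`: the weights then cannot sum to `m + 3`
  obtain ⟨c, hc⟩ := h (fun u v => if s(u, v) = s(0, 1) then (m : ZMod 2) else 0) fun u v => by
    simp only [Sym2.eq_swap (a := v), ZMod.neg_eq_self_mod_two]
  have hstep (i : Fin (m + 3)) : c i - c (i + 1) = (if i = 0 then (m : ZMod 2) else 0) + 1 := by
    have hne := hc i (i + 1) (cycleGraph_adj_iff_eq_add_one.2 (Or.inr rfl))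
    have hi : s(i, i + 1) = s(0, 1) ↔ i = 0 := by
      simpa only [zero_add] using Fin.sym2_mk_add_one_inj (i := i) (j := 0)
    simp only [hi] at hne
    exact eq_add_one_of_ne hne
  have hsum := Finset.sum_congr rfl fun i (_ : i ∈ Finset.univ) => hstep i
  rw [Finset.sum_sub_distrib, Fintype.sum_equiv (Equiv.addRight 1) (fun i => c (i + 1)) c
    fun _ => rfl, sub_self, Finset.sum_add_distrib, Fintype.sum_ite_eq', Finset.sum_const,
    Finset.card_univ, Fintype.card_fin, nsmul_eq_mul, mul_one] at hsum
  push_cast at hsum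
  exact add_add_three_ne_zero _ hsum.symm

end Cycle

end SimpleGraph

/-- If `G` is a cycle (of length `n ≥ 3`), then `χ'_g(G) = χ'_gl(G) = 3`. -/
theorem groupEdgeChromaticNumber_eq_three_of_cycle {V : Type*} (G : SimpleGraph V)
    (hG : IsCycleGraph G) :
    groupEdgeChromaticNumber G = 3 ∧ groupEdgeChoiceNumber G = 3 := by
  obtain ⟨n, hn, ⟨e⟩⟩ := hG
  obtain ⟨m, rfl⟩ := Nat.exists_eq_add_of_le' hn
  have e' : G.lineGraph ≃g cycleGraph (m + 3) := e.lineGraph.trans cycleGraphIsoLineGraph.symm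
  have hA := cycleGraph_not_isGroupColorable_zmod_two (m := m)
  have hchoos : IsGroupChoosable (cycleGraph (m + 3)) (Fintype.card (ZMod 2) + 1) := by
    rw [ZMod.card]; exact cycleGraph_isGroupChoosable_three
  constructor
  · rw [groupEdgeChromaticNumber, groupChromaticNumber_congr e',
      groupChromaticNumber_eq_of_isGroupChoosable hchoos hA, ZMod.card]
  · rw [groupEdgeChoiceNumber, groupChoiceNumber_congr e',
      groupChoiceNumber_eq_of_isGroupChoosable hchoos hA, ZMod.card]
end

section
/- For any connected simple graph G with maximum degree Δ(G) ≥ 3, the group edge choice number satisfies χ'_gl(G) ≤ 2Δ(G) − 2. -/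
open SimpleGraph

set_option linter.unusedSectionVars false
set_option linter.unusedVariables false
set_option maxHeartbeats 1000000

open Finset

section Engine
variable {W : Type*} [Fintype W] [DecidableEq W] {A : Type*} [AddCommGroup A] [DecidableEq A]
variable (H : SimpleGraph W) [DecidableRel H.Adj]

lemma flip_ne {a b x : A} (h : a - b ≠ x) : b - a ≠ -x := by
  intro h'; apply h; rw [← neg_neg (a - b), neg_sub, h', neg_neg]

lemma engine (L : W → Finset A) (f : W → W → A)
    (hf : ∀ u v, f v u = - f u v) (T : Finset W) (t₀ : W) (ht₀ : t₀ ∈ T)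
    (hdeg : ∀ w, w ∉ T → (H.neighborFinset w).card ≤ (L w).card ∧ H.Reachable w t₀) :
    ∃ c : W → A, (∀ w, w ∉ T → c w ∈ L w) ∧
      (∀ u v, u ∉ T → v ∉ T → H.Adj u v → c u - c v ≠ f u v) := by
  suffices aux : ∀ (n : ℕ) (U : Finset W), (U \ T).card = n → T ⊆ U → ∀ c : W → A,
      (∀ v, v ∉ U → c v ∈ L v) →
      (∀ u v, u ∉ U → v ∉ U → H.Adj u v → c u - c v ≠ f u v) →
      (∀ v, v ∉ U → ∀ u ∈ U \ T, H.dist u t₀ ≤ H.dist v t₀) →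
      ∃ c' : W → A, (∀ w, w ∉ T → c' w ∈ L w) ∧
        (∀ u v, u ∉ T → v ∉ T → H.Adj u v → c' u - c' v ≠ f u v) by
    exact aux _ Finset.univ rfl (Finset.subset_univ T) (fun _ => 0)
      (fun v hv => absurd (Finset.mem_univ v) hv)
      (fun u v hu _ _ => absurd (Finset.mem_univ u) hu)
      (fun v hv => absurd (Finset.mem_univ v) hv)
  intro n
  induction n with
  | zero =>
    intro U hU hTU c P1 P2 _
    have hUT : U = T := by
      apply Finset.Subset.antisymm _ hTU
      intro x hx
      by_contra hxT
      have hmem : x ∈ U \ T := Finset.mem_sdiff.2 ⟨hx, hxT⟩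
      have hemp := Finset.card_eq_zero.1 hU
      rw [hemp] at hmem
      exact absurd hmem (Finset.notMem_empty x)
    subst hUT
    exact ⟨c, P1, P2⟩
  | succ n ih =>
    intro U hU hTU c P1 P2 INV
    have hne : (U \ T).Nonempty := by
      rw [← Finset.card_pos, hU]; omega
    obtain ⟨w, hwUT, hwmax⟩ := (U \ T).exists_max_image (fun u => H.dist u t₀) hne
    obtain ⟨hwU, hwT⟩ := Finset.mem_sdiff.1 hwUT
    -- find uncolored neighbor of w
    obtain ⟨hdw, hreach⟩ := hdeg w hwT
    have hwne : w ≠ t₀ := fun h => hwT (h ▸ ht₀)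
    have hdpos : 0 < H.dist w t₀ := hreach.pos_dist_of_ne hwne
    obtain ⟨p, hp⟩ := hreach.exists_walk_length_eq_dist
    have hplen : 0 < p.length := by rw [hp]; exact hdpos
    obtain ⟨x, hadjx, hdx⟩ : ∃ x, H.Adj w x ∧ H.dist x t₀ < H.dist w t₀ := by
      cases p with
      | nil => simp at hplen
      | cons h q =>
        refine ⟨_, h, ?_⟩
        have := H.dist_le q
        have hq : q.length + 1 = H.dist w t₀ := by simpa using hp
        omega
    have hxU : x ∈ U := by
      by_contra hxU
      exact absurd (INV x hxU w hwUT) (by omega)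
    -- choose a color for w
    set Fb : Finset A := ((H.neighborFinset w) \ U).image (fun z => c z + f w z) with hFb
    have hFbcard : Fb.card < (L w).card := by
      have h1 : (H.neighborFinset w) \ U ⊆ (H.neighborFinset w).erase x := by
        intro z hz
        obtain ⟨hz1, hz2⟩ := Finset.mem_sdiff.1 hz
        exact Finset.mem_erase.2 ⟨fun h => hz2 (h ▸ hxU), hz1⟩
      have h2 : ((H.neighborFinset w) \ U).card ≤ (H.neighborFinset w).card - 1 := by
        calc ((H.neighborFinset w) \ U).card ≤ ((H.neighborFinset w).erase x).card :=
              Finset.card_le_card h1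
          _ ≤ (H.neighborFinset w).card - 1 := by
              rw [Finset.card_erase_of_mem (by rwa [SimpleGraph.mem_neighborFinset])]
      have h3 : Fb.card ≤ ((H.neighborFinset w) \ U).card := Finset.card_image_le
      have h4 : 0 < (H.neighborFinset w).card :=
        Finset.card_pos.2 ⟨x, by rwa [SimpleGraph.mem_neighborFinset]⟩
      omega
    obtain ⟨a, ha⟩ : (L w \ Fb).Nonempty := by
      rw [← Finset.card_pos]
      have := Finset.le_card_sdiff Fb (L w)
      omega
    obtain ⟨haL, haFb⟩ := Finset.mem_sdiff.1 ha
    -- extend the coloring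
    have hcard' : ((U.erase w) \ T).card = n := by
      have : (U.erase w) \ T = (U \ T).erase w := by
        ext z
        simp only [Finset.mem_sdiff, Finset.mem_erase]
        tauto
      rw [this, Finset.card_erase_of_mem hwUT, hU]
      omega
    refine ih (U.erase w) hcard' ?_ (Function.update c w a) ?_ ?_ ?_
    · intro t ht
      exact Finset.mem_erase.2 ⟨fun h => hwT (h ▸ ht), hTU ht⟩
    · intro v hv
      rcases eq_or_ne v w with rfl | hvw
      · rw [Function.update_self]; exact haL
      · rw [Function.update_of_ne hvw]
        apply P1
        intro hvU
        exact hv (Finset.mem_erase.2 ⟨hvw, hvU⟩)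
    · intro u v hu hv hadj
      have huw : u ∉ U ∨ u = w := by
        by_cases h : u = w
        · exact Or.inr h
        · exact Or.inl (fun hU' => hu (Finset.mem_erase.2 ⟨h, hU'⟩))
      have hvw' : v ∉ U ∨ v = w := by
        by_cases h : v = w
        · exact Or.inr h
        · exact Or.inl (fun hU' => hv (Finset.mem_erase.2 ⟨h, hU'⟩))
      rcases huw with hu' | hueq
      · rcases hvw' with hv' | hveq
        · have huw2 : u ≠ w := fun h => hu' (h ▸ hwU)
          have hvw2 : v ≠ w := fun h => hv' (h ▸ hwU)
          rw [Function.update_of_ne huw2, Function.update_of_ne hvw2]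
          exact P2 u v hu' hv' hadj
        · have hveq2 := hveq.symm
          subst hveq2
          have huw2 : u ≠ w := H.ne_of_adj hadj
          rw [Function.update_of_ne huw2, Function.update_self]
          have hmem : u ∈ (H.neighborFinset w) \ U := by
            rw [Finset.mem_sdiff, SimpleGraph.mem_neighborFinset]
            exact ⟨hadj.symm, hu'⟩
          have : a ≠ c u + f w u := by
            intro h
            exact haFb (Finset.mem_image.2 ⟨u, hmem, h.symm⟩)
          intro h
          apply this
          have h3 := congrArg Neg.neg h
          rw [neg_sub] at h3
          rw [hf w u, neg_neg] at h3
          rw [sub_eq_iff_eq_add] at h3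
          rw [h3, add_comm]
      · have hueq2 := hueq.symm
        subst hueq2
        rcases hvw' with hv' | hveq
        · have hvw2 : v ≠ w := fun h => hv' (h ▸ hwU)
          rw [Function.update_of_ne hvw2, Function.update_self]
          have hmem : v ∈ (H.neighborFinset w) \ U := by
            rw [Finset.mem_sdiff, SimpleGraph.mem_neighborFinset]
            exact ⟨hadj, hv'⟩
          intro h
          apply haFb
          refine Finset.mem_image.2 ⟨v, hmem, ?_⟩
          rw [← h]
          abel
        · have hveq2 := hveq.symm
          subst hveq2
          exact absurd hadj (H.irrefl)
    · intro v hv u hu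
      obtain ⟨huU, huT⟩ := Finset.mem_sdiff.1 hu
      have huU' : u ∈ U := Finset.mem_of_mem_erase huU
      rcases eq_or_ne v w with rfl | hvw
      · exact hwmax u (Finset.mem_sdiff.2 ⟨huU', huT⟩)
      · have : v ∉ U := fun hvU => hv (Finset.mem_erase.2 ⟨hvw, hvU⟩)
        exact INV v this u (Finset.mem_sdiff.2 ⟨huU', huT⟩)

end Engine


section Chain
variable {W : Type*} {A : Type*} [AddCommGroup A] [DecidableEq A]

lemma chain_color' (L : W → Finset A) (f : W → W → A) :
    ∀ (len : ℕ) (x : ℕ → W) (a : ℕ) (w0 : W) (β : A),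
    (∀ j, a ≤ j → j ≤ a + len → 2 ≤ (L (x j)).card) →
    ∃ c : ℕ → A, (∀ j, a ≤ j → j ≤ a + len → c j ∈ L (x j)) ∧
      (∀ j, a ≤ j → j < a + len → c j - c (j+1) ≠ f (x j) (x (j+1))) ∧
      (c (a+len) - β ≠ f (x (a+len)) w0) := by
  intro len
  induction len with
  | zero =>
    intro x a w0 β hcard
    obtain ⟨γ, hγ⟩ : (L (x a) \ {β + f (x a) w0}).Nonempty := by
      rw [← Finset.card_pos]
      have h1 := Finset.le_card_sdiff ({β + f (x a) w0} : Finset A) (L (x a))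
      have h2 := hcard a le_rfl (by omega)
      have h3 : ({β + f (x a) w0} : Finset A).card = 1 := Finset.card_singleton _
      omega
    obtain ⟨hγL, hγne⟩ := Finset.mem_sdiff.1 hγ
    refine ⟨fun _ => γ, ?_, ?_, ?_⟩
    · intro j hj1 hj2
      have : j = a := by omega
      subst this; exact hγL
    · intro j hj1 hj2; omega
    · intro h
      apply hγne
      rw [Finset.mem_singleton, ← sub_eq_iff_eq_add'] at *
      simpa using h
  | succ len ih =>
    intro x a w0 β hcard
    obtain ⟨γ, hγ⟩ : (L (x (a+len+1)) \ {β + f (x (a+len+1)) w0}).Nonempty := by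
      rw [← Finset.card_pos]
      have h1 := Finset.le_card_sdiff ({β + f (x (a+len+1)) w0} : Finset A) (L (x (a+len+1)))
      have h2 := hcard (a+len+1) (by omega) (by omega)
      have h3 : ({β + f (x (a+len+1)) w0} : Finset A).card = 1 := Finset.card_singleton _
      omega
    obtain ⟨hγL, hγne⟩ := Finset.mem_sdiff.1 hγ
    obtain ⟨c, hc1, hc2, hc3⟩ := ih x a (x (a+len+1)) γ (fun j h1 h2 => hcard j h1 (by omega))
    refine ⟨fun j => if j = a+len+1 then γ else c j, ?_, ?_, ?_⟩
    · intro j hj1 hj2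
      by_cases h : j = a+len+1
      · subst h; simp only [if_pos rfl]; exact hγL
      · simp only [if_neg h]; exact hc1 j hj1 (by omega)
    · intro j hj1 hj2
      by_cases h : j + 1 = a+len+1
      · have hj : j = a + len := by omega
        subst hj
        simp only [if_neg (by omega : ¬ a+len = a+len+1), if_pos h]
        have := hc3
        rw [show a + len + 1 = (a+len)+1 from rfl] at h
        have hxx : x (a+len+1) = x (a+len+1) := rfl
        -- c (a+len) - γ ≠ f (x (a+len)) (x (a+len+1))
        simpa [h] using hc3
      · have hj2' : j < a + len := by omega
        simp only [if_neg (by omega : ¬ j = a+len+1), if_neg h]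
        exact hc2 j hj1 hj2'
    · have harw : a + (len+1) = a + len + 1 := by omega
      rw [harw]
      simp only [if_pos rfl]
      intro h
      apply hγne
      rw [Finset.mem_singleton, ← sub_eq_iff_eq_add'] at *
      simpa using h
end Chain


section Theta
variable {W : Type*} {A : Type*} [AddCommGroup A] [DecidableEq A]


lemma theta_color (L : W → Finset A) (f : W → W → A)
    (x0 x1 g : W) (m : ℕ) (hm : 3 ≤ m) (x : ℕ → W)
    (hd01 : x0 ≠ x1) (hd0g : x0 ≠ g) (hd1g : x1 ≠ g)
    (hne0 : ∀ j, 2 ≤ j → j ≤ m-1 → x j ≠ x0 ∧ x j ≠ x1 ∧ x j ≠ g)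
    (hinj : ∀ j j', 2 ≤ j → j ≤ m-1 → 2 ≤ j' → j' ≤ m-1 → x j = x j' → j = j')
    (hc0 : 3 ≤ (L x0).card) (hc1 : 3 ≤ (L x1).card) (hcg : 2 ≤ (L g).card)
    (hcx : ∀ j, 2 ≤ j → j ≤ m-1 → 2 ≤ (L (x j)).card) :
    ∃ c : W → A,
      c x0 ∈ L x0 ∧ c x1 ∈ L x1 ∧ c g ∈ L g ∧
      (∀ j, 2 ≤ j → j ≤ m-1 → c (x j) ∈ L (x j)) ∧
      (c x1 - c x0 ≠ f x1 x0) ∧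
      (c g - c x0 ≠ f g x0) ∧
      (c x1 - c g ≠ f x1 g) ∧
      (c x1 - c (x 2) ≠ f x1 (x 2)) ∧
      (∀ j, 2 ≤ j → j < m-1 → c (x j) - c (x (j+1)) ≠ f (x j) (x (j+1))) ∧
      (c (x (m-1)) - c x0 ≠ f (x (m-1)) x0) := by
  -- step 1: find α ∈ L x0 with at least 2 choices left for g
  obtain ⟨α, hαL, hαg⟩ : ∃ α ∈ L x0, 2 ≤ ((L g).erase (α + f g x0)).card := by
    by_cases hex : ∃ α ∈ L x0, α + f g x0 ∉ L g
    · obtain ⟨α, hα1, hα2⟩ := hex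
      refine ⟨α, hα1, ?_⟩
      rw [Finset.erase_eq_self.2 hα2]
      exact hcg
    · push_neg at hex
      have himg : (L x0).image (fun α => α + f g x0) ⊆ L g := by
        intro z hz
        obtain ⟨α, hα, rfl⟩ := Finset.mem_image.1 hz
        exact hex α hα
      have hcard : 3 ≤ (L g).card := by
        have h1 : ((L x0).image (fun α => α + f g x0)).card = (L x0).card :=
          Finset.card_image_of_injective _ (add_left_injective _)
        have h2 := Finset.card_le_card himg
        omega
      obtain ⟨α, hα⟩ := Finset.card_pos.1 (by omega : 0 < (L x0).card)
      refine ⟨α, hα, ?_⟩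
      have := Finset.card_erase_of_mem (a := α + f g x0) (s := L g)
      by_cases hmem : α + f g x0 ∈ L g
      · rw [Finset.card_erase_of_mem hmem]; omega
      · rw [Finset.erase_eq_self.2 hmem]; omega
  -- step 2: color the chain x_(m-1) ... x_2 with top linked to (x0, α)
  obtain ⟨cc, hcc1, hcc2, hcc3⟩ := chain_color' L f (m-3) x 2 x0 α
    (by intro j h1 h2; exact hcx j h1 (by omega))
  have h2len : 2 + (m-3) = m - 1 := by omega
  rw [h2len] at hcc1 hcc2 hcc3
  -- step 3: choose colors for g and x1
  obtain ⟨t1, ht1, t2, ht2, ht12⟩ := Finset.one_lt_card.1 (by omega : 1 < ((L g).erase (α + f g x0)).card)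
  set s : A := cc 2 with hs
  set M : Finset A := L x1 \ {α + f x1 x0, s + f x1 (x 2)} with hM
  have hMcard : 1 ≤ M.card := by
    rw [hM]
    have h1 := Finset.le_card_sdiff ({α + f x1 x0, s + f x1 (x 2)} : Finset A) (L x1)
    have h2 : ({α + f x1 x0, s + f x1 (x 2)} : Finset A).card ≤ 2 :=
      Finset.card_insert_le _ _ |>.trans (by simp)
    omega
  obtain ⟨t, htg, γ, hγM, hγt⟩ : ∃ t ∈ (L g).erase (α + f g x0), ∃ γ ∈ M, γ ≠ t + f x1 g := by
    by_cases hex : ∃ γ ∈ M, γ ≠ t1 + f x1 g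
    · obtain ⟨γ, h1, h2⟩ := hex
      exact ⟨t1, ht1, γ, h1, h2⟩
    · push_neg at hex
      obtain ⟨γ0, hγ0⟩ := Finset.card_pos.1 (by omega : 0 < M.card)
      refine ⟨t2, ht2, γ0, hγ0, ?_⟩
      rw [hex γ0 hγ0]
      intro h
      exact ht12 (by exact add_right_cancel h)
  obtain ⟨htL, htne⟩ : t ∈ L g ∧ t ≠ α + f g x0 := by
    have := Finset.mem_erase.1 htg; exact ⟨this.2, this.1⟩
  have hγL : γ ∈ L x1 := (Finset.mem_sdiff.1 hγM).1
  have hγn1 : γ ≠ α + f x1 x0 := by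
    have := (Finset.mem_sdiff.1 hγM).2
    intro h; exact this (by rw [h]; exact Finset.mem_insert_self _ _)
  have hγn2 : γ ≠ s + f x1 (x 2) := by
    have := (Finset.mem_sdiff.1 hγM).2
    intro h; exact this (by rw [h]; exact Finset.mem_insert_of_mem (Finset.mem_singleton_self _))
  -- step 4: assemble
  classical
  set cfun : W → A := fun w => if w = x0 then α else if w = x1 then γ else if w = g then t
    else if h : ∃ j, 2 ≤ j ∧ j ≤ m-1 ∧ x j = w then cc h.choose else 0 with hcfun
  have e0 : cfun x0 = α := by rw [hcfun]; simp
  have e1 : cfun x1 = γ := by rw [hcfun]; simp [Ne.symm hd01]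
  have eg : cfun g = t := by
    rw [hcfun]; simp [Ne.symm hd0g, Ne.symm hd1g]
  have ex : ∀ j, 2 ≤ j → j ≤ m-1 → cfun (x j) = cc j := by
    intro j h1 h2
    obtain ⟨hne1, hne2, hne3⟩ := hne0 j h1 h2
    rw [hcfun]
    have hex : ∃ j', 2 ≤ j' ∧ j' ≤ m-1 ∧ x j' = x j := ⟨j, h1, h2, rfl⟩
    simp only [if_neg hne1, if_neg hne2, if_neg hne3, dif_pos hex]
    obtain ⟨hj'1, hj'2, hj'3⟩ := hex.choose_spec
    rw [hinj _ _ hj'1 hj'2 h1 h2 hj'3]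
  have hsub : ∀ (a b z : A), a ≠ b + z → a - b ≠ z := by
    intro a b z h hh
    exact h (by rw [← hh]; abel)
  refine ⟨cfun, ?_, ?_, ?_, ?_, ?_, ?_, ?_, ?_, ?_, ?_⟩
  · rw [e0]; exact hαL
  · rw [e1]; exact hγL
  · rw [eg]; exact htL
  · intro j h1 h2; rw [ex j h1 h2]; exact hcc1 j h1 h2
  · rw [e1, e0]; exact hsub _ _ _ hγn1
  · rw [eg, e0]; exact hsub _ _ _ htne
  · rw [e1, eg]; exact hsub _ _ _ hγt
  · rw [e1, ex 2 le_rfl (by omega)]; exact hsub _ _ _ hγn2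
  · intro j h1 h2
    rw [ex j h1 (by omega), ex (j+1) (by omega) (by omega)]
    exact hcc2 j h1 h2
  · rw [ex (m-1) (by omega) le_rfl, e0]
    exact hcc3
end Theta


section LG
variable {V : Type*} [Fintype V] [DecidableEq V] (G : SimpleGraph V) [DecidableRel G.Adj]

lemma edge_rep (e : G.edgeSet) : ∃ a b, G.Adj a b ∧ (e : Sym2 V) = s(a,b) := by
  rcases e with ⟨q, hq⟩
  induction q using Sym2.ind with
  | _ a b => exact ⟨a, b, (G.mem_edgeSet).1 hq, rfl⟩

lemma sym2_eq_pair {z : Sym2 V} {a b : V} (hab : a ≠ b) (ha : a ∈ z) (hb : b ∈ z) :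
    z = s(a,b) := by
  induction z using Sym2.ind with
  | _ c d =>
    rw [Sym2.mem_iff] at ha hb
    rcases ha with rfl | rfl <;> rcases hb with rfl | rfl
    · exact absurd rfl hab
    · rfl
    · exact Sym2.eq_swap
    · exact absurd rfl hab

lemma lineDeg_le [Fintype G.edgeSet] [DecidableRel (G.lineGraph).Adj]
    (e : G.edgeSet) {a b : V} (hab : a ≠ b)
    (ha : a ∈ (e : Sym2 V)) (hb : b ∈ (e : Sym2 V)) :
    ((G.lineGraph).neighborFinset e).card + 2 ≤ G.degree a + G.degree b := by
  have hrep : (e : Sym2 V) = s(a,b) := sym2_eq_pair hab ha hb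
  set F : Finset (Sym2 V) := (G.incidenceFinset a ∪ G.incidenceFinset b).erase (e : Sym2 V) with hF
  have hsub : ((G.lineGraph).neighborFinset e).image (Subtype.val) ⊆ F := by
    intro z hz
    obtain ⟨e', he', rfl⟩ := Finset.mem_image.1 hz
    rw [SimpleGraph.mem_neighborFinset] at he'
    obtain ⟨hne, v, hv1, hv2⟩ := (lineGraph_adj_iff_exists).1 he'
    refine Finset.mem_erase.2 ⟨?_, ?_⟩
    · intro h
      exact hne (Subtype.ext h.symm)
    · rw [hrep, Sym2.mem_iff] at hv1
      rcases hv1 with rfl | rfl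
      · exact Finset.mem_union_left _ (by
          rw [mem_incidenceFinset]
          exact ⟨e'.2, hv2⟩)
      · exact Finset.mem_union_right _ (by
          rw [mem_incidenceFinset]
          exact ⟨e'.2, hv2⟩)
  have hcard1 : ((G.lineGraph).neighborFinset e).card ≤ F.card := by
    rw [← Finset.card_image_of_injective ((G.lineGraph).neighborFinset e) Subtype.val_injective]
    exact Finset.card_le_card hsub
  have hinter : (e : Sym2 V) ∈ G.incidenceFinset a ∩ G.incidenceFinset b := by
    rw [Finset.mem_inter, mem_incidenceFinset, mem_incidenceFinset]
    exact ⟨⟨e.2, ha⟩, ⟨e.2, hb⟩⟩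
  have hun : (e : Sym2 V) ∈ G.incidenceFinset a ∪ G.incidenceFinset b :=
    Finset.mem_union_left _ (Finset.mem_inter.1 hinter).1
  have hFcard : F.card + 1 = (G.incidenceFinset a ∪ G.incidenceFinset b).card := by
    rw [hF, Finset.card_erase_of_mem hun]
    have : 0 < (G.incidenceFinset a ∪ G.incidenceFinset b).card :=
      Finset.card_pos.2 ⟨_, hun⟩
    omega
  have hU := Finset.card_union_add_card_inter (G.incidenceFinset a) (G.incidenceFinset b)
  have hI : 1 ≤ (G.incidenceFinset a ∩ G.incidenceFinset b).card :=
    Finset.card_pos.2 ⟨_, hinter⟩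
  have hda := G.card_incidenceFinset_eq_degree a
  have hdb := G.card_incidenceFinset_eq_degree b
  omega

lemma lineGraph_preconnected (hG : G.Connected) : (G.lineGraph).Preconnected := by
  have key : ∀ {a c : V} (p : G.Walk a c) (e e' : G.edgeSet),
      a ∈ (e : Sym2 V) → c ∈ (e' : Sym2 V) → (G.lineGraph).Reachable e e' := by
    intro a c p
    induction p with
    | nil =>
      intro e e' ha hc
      by_cases h : e = e'
      · subst h; rfl
      · exact SimpleGraph.Adj.reachable ((lineGraph_adj_iff_exists).2 ⟨h, _, ha, hc⟩)
    | @cons a b c hab q ih =>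
      intro e e' ha hc
      have hstep : (G.lineGraph).Reachable e ⟨s(a,b), (G.mem_edgeSet).2 hab⟩ := by
        by_cases h : e = ⟨s(a,b), (G.mem_edgeSet).2 hab⟩
        · subst h; rfl
        · exact SimpleGraph.Adj.reachable
            ((lineGraph_adj_iff_exists).2 ⟨h, a, ha, by simp⟩)
      exact hstep.trans (ih _ _ (by simp) hc)
  intro e e'
  obtain ⟨a, b, hab, he⟩ := edge_rep G e
  obtain ⟨a', b', hab', he'⟩ := edge_rep G e'
  obtain ⟨p⟩ := hG.preconnected a a'
  exact key p e e' (by rw [he]; simp) (by rw [he']; simp)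

end LG


section PathStuff
variable {V : Type*} [Fintype V] [DecidableEq V] {G : SimpleGraph V} [DecidableRel G.Adj]

lemma getVert_inj {u v : V} (p : G.Walk u v) (hp : p.IsPath) :
    ∀ i j, i ≤ p.length → j ≤ p.length → p.getVert i = p.getVert j → i = j := by
  induction p with
  | nil =>
    intro i j hi hj _
    simp only [SimpleGraph.Walk.length_nil] at hi hj
    omega
  | @cons a b c hadj q ih =>
    intro i j hi hj hij
    rw [SimpleGraph.Walk.cons_isPath_iff] at hp
    obtain ⟨hq, hnotin⟩ := hp
    match i, j with
    | 0, 0 => rfl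
    | 0, j+1 =>
      exfalso
      apply hnotin
      rw [SimpleGraph.Walk.mem_support_iff_exists_getVert]
      have hij' : a = q.getVert j := by simpa using hij
      refine ⟨j, hij'.symm, ?_⟩
      simp only [SimpleGraph.Walk.length_cons] at hj; omega
    | i+1, 0 =>
      exfalso
      apply hnotin
      rw [SimpleGraph.Walk.mem_support_iff_exists_getVert]
      have hij' : q.getVert i = a := by simpa using hij
      refine ⟨i, hij', ?_⟩
      simp only [SimpleGraph.Walk.length_cons] at hi; omega
    | i+1, j+1 =>
      simp only [SimpleGraph.Walk.length_cons] at hi hj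
      have := ih hq i j (by omega) (by omega) (by simpa using hij)
      omega

lemma exists_maximal_path (hG : G.Connected) {v0 : V} (hv0 : 0 < G.degree v0) :
    ∃ (u v : V) (p : G.Walk u v), p.IsPath ∧ 0 < p.length ∧
      (∀ z, G.Adj u z → z ∈ p.support) := by
  -- an initial path of length 1
  obtain ⟨w0, hw0⟩ := Finset.card_pos.1 hv0
  rw [SimpleGraph.mem_neighborFinset] at hw0
  have hstart : ∃ (u v : V) (p : G.Walk u v), p.IsPath ∧ 0 < p.length := by
    refine ⟨v0, w0, SimpleGraph.Walk.cons hw0 SimpleGraph.Walk.nil, ?_, by simp⟩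
    simp [SimpleGraph.Walk.cons_isPath_iff, hw0.ne']
    exact hw0.ne
  -- extend to a maximal one by induction on card V - length
  suffices aux : ∀ (k : ℕ) (u v : V) (p : G.Walk u v), p.IsPath → 0 < p.length →
      Fintype.card V - p.length ≤ k →
      ∃ (u' v' : V) (p' : G.Walk u' v'), p'.IsPath ∧ 0 < p'.length ∧
        (∀ z, G.Adj u' z → z ∈ p'.support) by
    obtain ⟨u, v, p, hp, hl⟩ := hstart
    exact aux _ u v p hp hl le_rfl
  intro k
  induction k with
  | zero =>
    intro u v p hp hl hk
    exfalso
    have := hp.length_lt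
    omega
  | succ k ih =>
    intro u v p hp hl hk
    by_cases hex : ∃ z, G.Adj u z ∧ z ∉ p.support
    · obtain ⟨z, hz1, hz2⟩ := hex
      have hp' : (SimpleGraph.Walk.cons hz1.symm p).IsPath := by
        rw [SimpleGraph.Walk.cons_isPath_iff]; exact ⟨hp, hz2⟩
      have := hp'.length_lt
      refine ih z v (SimpleGraph.Walk.cons hz1.symm p) hp' (by simp) ?_
      simp only [SimpleGraph.Walk.length_cons]
      omega
    · push_neg at hex
      exact ⟨u, v, p, hp, hl, fun z hz => by
        by_contra hn
        exact hn (hex z hz)⟩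

lemma neighbors_on_path {u v : V} (p : G.Walk u v) (hp : p.IsPath)
    (hmax : ∀ z, G.Adj u z → z ∈ p.support) (hdeg : 3 ≤ G.degree u) :
    ∃ i2 i3, 2 ≤ i2 ∧ i2 < i3 ∧ i3 ≤ p.length ∧
      G.Adj u (p.getVert i2) ∧ G.Adj u (p.getVert i3) := by
  set I : Finset ℕ := (Finset.range (p.length + 1)).filter (fun i => G.Adj u (p.getVert i)) with hI
  have hsub : G.neighborFinset u ⊆ I.image p.getVert := by
    intro z hz
    rw [SimpleGraph.mem_neighborFinset] at hz
    have hzsup := hmax z hz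
    rw [SimpleGraph.Walk.mem_support_iff_exists_getVert] at hzsup
    obtain ⟨i, hi1, hi2⟩ := hzsup
    refine Finset.mem_image.2 ⟨i, ?_, hi1⟩
    rw [hI, Finset.mem_filter, Finset.mem_range]
    rw [hi1]
    exact ⟨by omega, hz⟩
  have hIcard : 3 ≤ I.card := by
    have h1 := Finset.card_le_card hsub
    have h2 := Finset.card_image_le (s := I) (f := p.getVert)
    have h3 : 3 ≤ (G.neighborFinset u).card := by
      rw [SimpleGraph.card_neighborFinset_eq_degree]; exact hdeg
    omega
  have hne0 : 0 ∉ I := by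
    rw [hI, Finset.mem_filter]
    rintro ⟨_, h⟩
    rw [SimpleGraph.Walk.getVert_zero] at h
    exact G.irrefl h
  have h2card : 2 ≤ (I.erase 1).card := by
    have := Finset.card_erase_of_mem (a := 1) (s := I)
    by_cases h1 : 1 ∈ I
    · rw [Finset.card_erase_of_mem h1]; omega
    · rw [Finset.erase_eq_self.2 h1]; omega
  obtain ⟨a, ha, b, hb, hab⟩ := Finset.one_lt_card.1 (by omega : 1 < (I.erase 1).card)
  have hmem : ∀ x ∈ I.erase 1, 2 ≤ x ∧ x ≤ p.length ∧ G.Adj u (p.getVert x) := by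
    intro x hx
    obtain ⟨hx1, hx2⟩ := Finset.mem_erase.1 hx
    rw [hI, Finset.mem_filter, Finset.mem_range] at hx2
    have hx0 : x ≠ 0 := by
      rintro rfl
      rw [SimpleGraph.Walk.getVert_zero] at hx2
      exact G.irrefl hx2.2
    exact ⟨by omega, by omega, hx2.2⟩
  obtain ⟨ha1, ha2, ha3⟩ := hmem a ha
  obtain ⟨hb1, hb2, hb3⟩ := hmem b hb
  rcases Nat.lt_or_ge a b with h | h
  · exact ⟨a, b, ha1, h, hb2, ha3, hb3⟩
  · exact ⟨b, a, hb1, by omega, ha2, hb3, ha3⟩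

end PathStuff


/-- For any connected simple graph `G` with `Δ(G) ≥ 3`, `χ'_gl(G) ≤ 2Δ(G) - 2`. -/
theorem groupEdgeChoiceNumber_le_two_mul_maxDegree_sub_two {V : Type*} [Fintype V]
    (G : SimpleGraph V) [DecidableRel G.Adj] (hG : G.Connected) (hΔ : 3 ≤ G.maxDegree) :
    groupEdgeChoiceNumber G ≤ 2 * G.maxDegree - 2 := by
  classical
  have hmem : IsGroupChoosable G.lineGraph (2 * G.maxDegree - 2) := by
    intro A iA fA hAcard L hL f hf
    haveI : DecidableEq V := Classical.decEq V
    haveI : Fintype ↑G.edgeSet := (Set.toFinite _).fintype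
    haveI : DecidableRel (G.lineGraph).Adj := Classical.decRel _
    have hk4 : 4 ≤ 2 * G.maxDegree - 2 := by omega
    have hsub : ∀ (x y z : A), x ≠ y + z → x - y ≠ z := by
      intro x y z h hh
      exact h (by rw [← hh]; abel)
    have hflip : ∀ (x y : A) (u v : ↑G.edgeSet), x - y ≠ f u v → y - x ≠ f v u := by
      intro x y u v h hh
      apply h
      rw [← neg_sub y x, hh, hf u v, neg_neg]
    have hdegH : ∀ e : ↑G.edgeSet,
        ((G.lineGraph).neighborFinset e).card ≤ 2 * G.maxDegree - 2 := by
      intro e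
      obtain ⟨a, b, hab, hrep⟩ := edge_rep G e
      have h1 := lineDeg_le G e hab.ne (by rw [hrep]; simp) (by rw [hrep]; simp)
      have h2 := G.degree_le_maxDegree a
      have h3 := G.degree_le_maxDegree b
      omega
    have hpre := lineGraph_preconnected G hG
    by_cases hcase : ∃ a b, G.Adj a b ∧ G.degree a + G.degree b < 2 * G.maxDegree
    · -- CASE 1: some edge with small degree sum
      obtain ⟨a, b, hab, hsum⟩ := hcase
      set e0 : ↑G.edgeSet := ⟨s(a,b), (G.mem_edgeSet).2 hab⟩ with he0
      obtain ⟨c, hc1, hc2⟩ := engine (G.lineGraph) L f hf {e0} e0 (Finset.mem_singleton_self e0)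
        (fun w _ => ⟨by rw [hL w]; exact hdegH w, hpre w e0⟩)
      have hnbr : ((G.lineGraph).neighborFinset e0).card < 2 * G.maxDegree - 2 := by
        have h1 := lineDeg_le G e0 hab.ne (by simp [he0]) (by simp [he0])
        omega
      set Fb : Finset A := ((G.lineGraph).neighborFinset e0).image (fun z => c z + f e0 z)
        with hFb
      obtain ⟨a0, ha0⟩ : (L e0 \ Fb).Nonempty := by
        rw [← Finset.card_pos]
        have h1 := Finset.le_card_sdiff Fb (L e0)
        have h2 : Fb.card ≤ ((G.lineGraph).neighborFinset e0).card := Finset.card_image_le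
        have h3 := hL e0
        omega
      obtain ⟨ha0L, ha0F⟩ := Finset.mem_sdiff.1 ha0
      refine ⟨Function.update c e0 a0, ?_, ?_⟩
      · intro v
        by_cases hv : v = e0
        · subst hv; rw [Function.update_self]; exact ha0L
        · rw [Function.update_of_ne hv]
          exact hc1 v (by simpa using hv)
      · intro u v huv
        by_cases hu : u = e0 <;> by_cases hv : v = e0
        · subst hu; subst hv; exact absurd huv ((G.lineGraph).irrefl)
        · subst hu
          rw [Function.update_self, Function.update_of_ne hv]
          apply hsub
          intro h
          apply ha0F
          exact Finset.mem_image.2 ⟨v, SimpleGraph.mem_neighborFinset _ _ _ |>.2 huv, h.symm⟩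
        · subst hv
          rw [Function.update_self, Function.update_of_ne hu]
          apply hflip
          apply hsub
          intro h
          apply ha0F
          exact Finset.mem_image.2 ⟨u, SimpleGraph.mem_neighborFinset _ _ _ |>.2 huv.symm, h.symm⟩
        · rw [Function.update_of_ne hu, Function.update_of_ne hv]
          exact hc2 u v (by simpa using hu) (by simpa using hv) huv
    · -- CASE 2: G is maxDegree-regular
      push_neg at hcase
      have hreg : ∀ a b, G.Adj a b → G.degree a = G.maxDegree := by
        intro a b hab
        have h1 := hcase a b hab
        have h2 := G.degree_le_maxDegree a
        have h3 := G.degree_le_maxDegree b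
        omega
      haveI : Nonempty V := by
        by_contra h
        rw [not_nonempty_iff] at h
        have : G.maxDegree = 0 := by
          have : (Finset.univ : Finset V) = ∅ := Finset.univ_eq_empty
          rw [SimpleGraph.maxDegree, this]
          rfl
        omega
      obtain ⟨v0, hv0⟩ := G.exists_maximal_degree_vertex
      have hv0pos : 0 < G.degree v0 := by omega
      obtain ⟨u, vlast, p, hp, hlen, hmax'⟩ := exists_maximal_path hG hv0pos
      set n := p.length with hn
      set pv : ℕ → V := p.getVert with hpv
      have hu0 : pv 0 = u := p.getVert_zero
      have hpadj : ∀ j, j < n → G.Adj (pv j) (pv (j+1)) := fun j hj => p.adj_getVert_succ hj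
      have hpinj : ∀ i j, i ≤ n → j ≤ n → pv i = pv j → i = j := getVert_inj p hp
      have hdegu : 3 ≤ G.degree u := by
        have h1 : G.Adj u (pv 1) := by rw [← hu0]; exact hpadj 0 hlen
        have := hreg u (pv 1) h1
        omega
      obtain ⟨i2, i3, hi2, hi23, hi3, hA2, hA3⟩ := neighbors_on_path p hp hmax' hdegu
      have hn1 : 1 ≤ n := by omega
      have hi2n : i2 ≤ n := by omega
      have hA2' : G.Adj (pv 0) (pv i2) := by rw [hu0]; exact hA2
      have hA3' : G.Adj (pv 0) (pv i3) := by rw [hu0]; exact hA3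
      have hA1' : G.Adj (pv 0) (pv 1) := hpadj 0 (by omega)
      have hxadj : ∀ j, 1 ≤ j → j ≤ n → G.Adj (pv (j-1)) (pv j) := by
        intro j h1 h2
        have := hpadj (j-1) (by omega)
        rwa [Nat.sub_add_cancel h1] at this
      set x0E : ↑G.edgeSet := ⟨s(pv 0, pv i2), (G.mem_edgeSet).2 hA2'⟩ with hx0Edef
      set x1E : ↑G.edgeSet := ⟨s(pv 0, pv 1), (G.mem_edgeSet).2 hA1'⟩ with hx1Edef
      set gE : ↑G.edgeSet := ⟨s(pv 0, pv i3), (G.mem_edgeSet).2 hA3'⟩ with hgEdef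
      set xE : ℕ → ↑G.edgeSet := fun j =>
        if h : 1 ≤ j ∧ j ≤ n then ⟨s(pv (j-1), pv j), (G.mem_edgeSet).2 (hxadj j h.1 h.2)⟩
        else x0E with hxEdef
      have hx0Ev : (x0E : Sym2 V) = s(pv 0, pv i2) := by rw [hx0Edef]
      have hx1Ev : (x1E : Sym2 V) = s(pv 0, pv 1) := by rw [hx1Edef]
      have hgEv : (gE : Sym2 V) = s(pv 0, pv i3) := by rw [hgEdef]
      have hxEv : ∀ j, 1 ≤ j → j ≤ n → (xE j : Sym2 V) = s(pv (j-1), pv j) := by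
        intro j h1 h2
        rw [hxEdef]
        simp only [dif_pos (⟨h1, h2⟩ : 1 ≤ j ∧ j ≤ n)]
      have hEeq : ∀ a b c d : ℕ, a ≤ n → b ≤ n → c ≤ n → d ≤ n →
          (s(pv a, pv b) : Sym2 V) = s(pv c, pv d) →
          ((a = c ∧ b = d) ∨ (a = d ∧ b = c)) := by
        intro a b c d ha hb hc hd h
        rw [Sym2.eq_iff] at h
        rcases h with ⟨h1, h2⟩ | ⟨h1, h2⟩
        · exact Or.inl ⟨hpinj _ _ ha hc h1, hpinj _ _ hb hd h2⟩
        · exact Or.inr ⟨hpinj _ _ ha hd h1, hpinj _ _ hb hc h2⟩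
      have hWne : ∀ (e1 e2 : ↑G.edgeSet), (e1 : Sym2 V) ≠ (e2 : Sym2 V) → e1 ≠ e2 := by
        intro e1 e2 h hh
        exact h (by rw [hh])
      have hShare : ∀ (a b c d : ℕ) (z : V), a ≤ n → b ≤ n → c ≤ n → d ≤ n →
          z ∈ (s(pv a, pv b) : Sym2 V) → z ∈ (s(pv c, pv d) : Sym2 V) →
          (a = c ∨ a = d ∨ b = c ∨ b = d) := by
        intro a b c d z ha hb hc hd h1 h2
        rw [Sym2.mem_iff] at h1 h2
        rcases h1 with rfl | rfl <;> rcases h2 with h | h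
        · exact Or.inl (hpinj _ _ ha hc h)
        · exact Or.inr (Or.inl (hpinj _ _ ha hd h))
        · exact Or.inr (Or.inr (Or.inl (hpinj _ _ hb hc h)))
        · exact Or.inr (Or.inr (Or.inr (hpinj _ _ hb hd h)))
      have hadjW : ∀ (e1 e2 : ↑G.edgeSet) (z : V), e1 ≠ e2 → z ∈ (e1 : Sym2 V) →
          z ∈ (e2 : Sym2 V) → (G.lineGraph).Adj e1 e2 := by
        intro e1 e2 z hne h1 h2
        exact lineGraph_adj_iff_exists.2 ⟨hne, z, h1, h2⟩
      -- basic distinctness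
      have hne01 : x0E ≠ x1E := by
        apply hWne; rw [hx0Ev, hx1Ev]
        intro h; rcases hEeq _ _ _ _ (by omega) hi2n (by omega) (by omega) h with ⟨_,h2⟩|⟨h1,_⟩ <;> omega
      have hne0g : x0E ≠ gE := by
        apply hWne; rw [hx0Ev, hgEv]
        intro h; rcases hEeq _ _ _ _ (by omega) hi2n (by omega) hi3 h with ⟨_,h2⟩|⟨h1,_⟩ <;> omega
      have hne1g : x1E ≠ gE := by
        apply hWne; rw [hx1Ev, hgEv]
        intro h; rcases hEeq _ _ _ _ (by omega) (by omega) (by omega) hi3 h with ⟨_,h2⟩|⟨h1,_⟩ <;> omega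
      have hnex0 : ∀ j, 2 ≤ j → j ≤ i2 → xE j ≠ x0E := by
        intro j h1 h2
        apply hWne; rw [hxEv j (by omega) (by omega), hx0Ev]
        intro h
        rcases hEeq _ _ _ _ (by omega) (by omega) (by omega) hi2n h with ⟨h3,h4⟩|⟨h3,h4⟩ <;> omega
      have hnex1 : ∀ j, 2 ≤ j → j ≤ i2 → xE j ≠ x1E := by
        intro j h1 h2
        apply hWne; rw [hxEv j (by omega) (by omega), hx1Ev]
        intro h
        rcases hEeq _ _ _ _ (by omega) (by omega) (by omega) (by omega) h with ⟨h3,h4⟩|⟨h3,h4⟩ <;> omega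
      have hnexg : ∀ j, 2 ≤ j → j ≤ i2 → xE j ≠ gE := by
        intro j h1 h2
        apply hWne; rw [hxEv j (by omega) (by omega), hgEv]
        intro h
        rcases hEeq _ _ _ _ (by omega) (by omega) (by omega) hi3 h with ⟨h3,h4⟩|⟨h3,h4⟩ <;> omega
      have hnexx : ∀ j j', 1 ≤ j → j ≤ i2 → 1 ≤ j' → j' ≤ i2 → j ≠ j' → xE j ≠ xE j' := by
        intro j j' h1 h2 h3 h4 h5
        apply hWne; rw [hxEv j (by omega) (by omega), hxEv j' (by omega) (by omega)]
        intro h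
        rcases hEeq _ _ _ _ (by omega) (by omega) (by omega) (by omega) h with ⟨h6,h7⟩|⟨h6,h7⟩ <;> omega
      have hx1eq : xE 1 = x1E := by
        apply Subtype.ext
        rw [hxEv 1 le_rfl hn1, hx1Ev]
      -- the theta vertex set
      set Tset : Finset ↑G.edgeSet :=
        insert x0E (insert x1E (insert gE ((Finset.Icc 2 i2).image xE))) with hTset
      have hx0T : x0E ∈ Tset := Finset.mem_insert_self _ _
      have hx1T : x1E ∈ Tset := by rw [hTset]; simp
      have hgT : gE ∈ Tset := by rw [hTset]; simp
      have hxET : ∀ j, 1 ≤ j → j ≤ i2 → xE j ∈ Tset := by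
        intro j h1 h2
        by_cases h : j = 1
        · subst h; rw [hx1eq]; exact hx1T
        · rw [hTset]
          refine Finset.mem_insert_of_mem (Finset.mem_insert_of_mem
            (Finset.mem_insert_of_mem (Finset.mem_image.2 ⟨j, ?_, rfl⟩)))
          rw [Finset.mem_Icc]; omega
      have hforms : ∀ w ∈ Tset, w = x0E ∨ w = x1E ∨ w = gE ∨
          ∃ j, 2 ≤ j ∧ j ≤ i2 ∧ w = xE j := by
        intro w hw
        rw [hTset] at hw
        rcases Finset.mem_insert.1 hw with h | hw
        · exact Or.inl h
        rcases Finset.mem_insert.1 hw with h | hw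
        · exact Or.inr (Or.inl h)
        rcases Finset.mem_insert.1 hw with h | hw
        · exact Or.inr (Or.inr (Or.inl h))
        obtain ⟨j, hj, rfl⟩ := Finset.mem_image.1 hw
        rw [Finset.mem_Icc] at hj
        exact Or.inr (Or.inr (Or.inr ⟨j, hj.1, hj.2, rfl⟩))
      -- color everything outside Tset
      obtain ⟨c0, hc01, hc02⟩ := engine (G.lineGraph) L f hf Tset x0E hx0T
        (fun w _ => ⟨by rw [hL w]; exact hdegH w, hpre w x0E⟩)
      -- reduced lists
      set L' : ↑G.edgeSet → Finset A := fun w =>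
        L w \ (((G.lineGraph).neighborFinset w \ Tset).image (fun z => c0 z + f w z)) with hL'
      have hL'sub : ∀ w, L' w ⊆ L w := fun w => Finset.sdiff_subset
      have hL'card : ∀ (w : ↑G.edgeSet) (S : Finset ↑G.edgeSet),
          S ⊆ (G.lineGraph).neighborFinset w → S ⊆ Tset → S.card ≤ (L' w).card := by
        intro w S h1 h2
        have hdisj : Disjoint ((G.lineGraph).neighborFinset w \ Tset) S := by
          rw [Finset.disjoint_left]
          intro z hz hzS
          exact (Finset.mem_sdiff.1 hz).2 (h2 hzS)
        have hcup : ((G.lineGraph).neighborFinset w \ Tset) ∪ S ⊆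
            (G.lineGraph).neighborFinset w := by
          intro z hz
          rcases Finset.mem_union.1 hz with h | h
          · exact (Finset.mem_sdiff.1 h).1
          · exact h1 h
        have h3 : ((G.lineGraph).neighborFinset w \ Tset).card + S.card ≤
            ((G.lineGraph).neighborFinset w).card := by
          rw [← Finset.card_union_of_disjoint hdisj]
          exact Finset.card_le_card hcup
        have h4 := Finset.le_card_sdiff
          ((((G.lineGraph).neighborFinset w \ Tset)).image (fun z => c0 z + f w z)) (L w)
        have h5 : ((((G.lineGraph).neighborFinset w \ Tset)).image
            (fun z => c0 z + f w z)).card ≤ ((G.lineGraph).neighborFinset w \ Tset).card :=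
          Finset.card_image_le
        have h6 := hL w
        have h7 := hdegH w
        simp only [hL']
        omega
      -- adjacencies within the theta
      have hadj01 : (G.lineGraph).Adj x0E x1E :=
        hadjW _ _ (pv 0) hne01 (by rw [hx0Ev]; simp) (by rw [hx1Ev]; simp)
      have hadj0g : (G.lineGraph).Adj x0E gE :=
        hadjW _ _ (pv 0) hne0g (by rw [hx0Ev]; simp) (by rw [hgEv]; simp)
      have hadj1g : (G.lineGraph).Adj x1E gE :=
        hadjW _ _ (pv 0) hne1g (by rw [hx1Ev]; simp) (by rw [hgEv]; simp)
      have hadj0xi2 : (G.lineGraph).Adj x0E (xE i2) := by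
        refine hadjW _ _ (pv i2) (Ne.symm (hnex0 i2 hi2 le_rfl)) (by rw [hx0Ev]; simp) ?_
        rw [hxEv i2 (by omega) (by omega)]; simp
      have hadj1x2 : (G.lineGraph).Adj x1E (xE 2) := by
        refine hadjW _ _ (pv 1) (Ne.symm (hnex1 2 le_rfl hi2)) (by rw [hx1Ev]; simp) ?_
        rw [hxEv 2 (by omega) (by omega)]
        norm_num
      have hadjxx : ∀ j, 1 ≤ j → j < i2 → (G.lineGraph).Adj (xE j) (xE (j+1)) := by
        intro j h1 h2
        refine hadjW _ _ (pv j) (hnexx j (j+1) h1 (by omega) (by omega) (by omega) (by omega)) ?_ ?_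
        · rw [hxEv j (by omega) (by omega)]; simp
        · rw [hxEv (j+1) (by omega) (by omega)]
          have : j + 1 - 1 = j := by omega
          rw [this]; simp
      -- list size bounds on the theta
      have hcard0 : 3 ≤ (L' x0E).card := by
        have hS : ({x1E, gE, xE i2} : Finset ↑G.edgeSet).card = 3 := by
          rw [Finset.card_insert_of_notMem, Finset.card_insert_of_notMem, Finset.card_singleton]
          · simp only [Finset.mem_singleton]
            exact fun h => (hnexg i2 hi2 le_rfl) h.symm
          · simp only [Finset.mem_insert, Finset.mem_singleton]
            rintro (h | h)
            · exact hne1g h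
            · exact (hnex1 i2 hi2 le_rfl) h.symm
        rw [← hS]
        refine hL'card x0E _ ?_ ?_
        · intro z hz
          simp only [Finset.mem_insert, Finset.mem_singleton] at hz
          rw [SimpleGraph.mem_neighborFinset]
          rcases hz with rfl | rfl | rfl
          · exact hadj01
          · exact hadj0g
          · exact hadj0xi2
        · intro z hz
          simp only [Finset.mem_insert, Finset.mem_singleton] at hz
          rcases hz with rfl | rfl | rfl
          · exact hx1T
          · exact hgT
          · exact hxET i2 (by omega) le_rfl
      have hcard1 : 3 ≤ (L' x1E).card := by
        have hS : ({x0E, gE, xE 2} : Finset ↑G.edgeSet).card = 3 := by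
          rw [Finset.card_insert_of_notMem, Finset.card_insert_of_notMem, Finset.card_singleton]
          · simp only [Finset.mem_singleton]
            exact fun h => (hnexg 2 le_rfl hi2) h.symm
          · simp only [Finset.mem_insert, Finset.mem_singleton]
            rintro (h | h)
            · exact hne0g h
            · exact (hnex0 2 le_rfl hi2) h.symm
        rw [← hS]
        refine hL'card x1E _ ?_ ?_
        · intro z hz
          simp only [Finset.mem_insert, Finset.mem_singleton] at hz
          rw [SimpleGraph.mem_neighborFinset]
          rcases hz with rfl | rfl | rfl
          · exact hadj01.symm
          · exact hadj1g
          · exact hadj1x2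
        · intro z hz
          simp only [Finset.mem_insert, Finset.mem_singleton] at hz
          rcases hz with rfl | rfl | rfl
          · exact hx0T
          · exact hgT
          · exact hxET 2 (by omega) hi2
      have hcardg : 2 ≤ (L' gE).card := by
        have hS : ({x0E, x1E} : Finset ↑G.edgeSet).card = 2 := Finset.card_pair hne01
        rw [← hS]
        refine hL'card gE _ ?_ ?_
        · intro z hz
          simp only [Finset.mem_insert, Finset.mem_singleton] at hz
          rw [SimpleGraph.mem_neighborFinset]
          rcases hz with rfl | rfl
          · exact hadj0g.symm
          · exact hadj1g.symm
        · intro z hz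
          simp only [Finset.mem_insert, Finset.mem_singleton] at hz
          rcases hz with rfl | rfl
          · exact hx0T
          · exact hx1T
      have hcardx : ∀ j, 2 ≤ j → j ≤ i2 → 2 ≤ (L' (xE j)).card := by
        intro j hj1 hj2
        by_cases hji : j = i2
        · subst hji
          have hS : ({xE (j-1), x0E} : Finset ↑G.edgeSet).card = 2 := by
            refine Finset.card_pair ?_
            intro h
            apply hWne (xE (j-1)) x0E ?_ h
            rw [hxEv (j-1) (by omega) (by omega), hx0Ev]
            intro hh
            rcases hEeq _ _ _ _ (by omega) (by omega) (by omega) hi2n hh with ⟨h3,h4⟩|⟨h3,h4⟩ <;>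
              omega
          rw [← hS]
          refine hL'card (xE j) _ ?_ ?_
          · intro z hz
            simp only [Finset.mem_insert, Finset.mem_singleton] at hz
            rw [SimpleGraph.mem_neighborFinset]
            rcases hz with rfl | rfl
            · have := hadjxx (j-1) (by omega) (by omega)
              have hj1' : j - 1 + 1 = j := by omega
              rw [hj1'] at this
              exact this.symm
            · exact hadj0xi2.symm
          · intro z hz
            simp only [Finset.mem_insert, Finset.mem_singleton] at hz
            rcases hz with rfl | rfl
            · exact hxET (j-1) (by omega) (by omega)
            · exact hx0T
        · have hS : ({xE (j-1), xE (j+1)} : Finset ↑G.edgeSet).card = 2 := by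
            refine Finset.card_pair (hnexx (j-1) (j+1) (by omega) (by omega) (by omega)
              (by omega) (by omega))
          rw [← hS]
          refine hL'card (xE j) _ ?_ ?_
          · intro z hz
            simp only [Finset.mem_insert, Finset.mem_singleton] at hz
            rw [SimpleGraph.mem_neighborFinset]
            rcases hz with rfl | rfl
            · have := hadjxx (j-1) (by omega) (by omega)
              have hj1' : j - 1 + 1 = j := by omega
              rw [hj1'] at this
              exact this.symm
            · exact hadjxx j (by omega) (by omega)
          · intro z hz
            simp only [Finset.mem_insert, Finset.mem_singleton] at hz
            rcases hz with rfl | rfl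
            · exact hxET (j-1) (by omega) (by omega)
            · exact hxET (j+1) (by omega) (by omega)
      -- apply the theta lemma
      obtain ⟨cT, hm0, hm1, hmg, hmx, ct1, ct2, ct3, ct4, ct5, ct6⟩ :=
        theta_color L' f x0E x1E gE (i2+1) (by omega) xE hne01 hne0g hne1g
          (fun j h1 h2 => ⟨hnex0 j h1 (by omega), hnex1 j h1 (by omega), hnexg j h1 (by omega)⟩)
          (fun j j' h1 h2 h3 h4 h => by
            by_contra hne
            exact (hnexx j j' (by omega) (by omega) (by omega) (by omega) hne) h)
          hcard0 hcard1 hcardg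
          (fun j h1 h2 => hcardx j h1 (by omega))
      simp only [Nat.add_sub_cancel] at hmx ct5 ct6
      -- final coloring
      set cfin : ↑G.edgeSet → A := fun w => if w ∈ Tset then cT w else c0 w with hcfin
      have hmemT : ∀ w (h : w ∈ Tset), cT w ∈ L' w := by
        intro w hw
        rcases hforms w hw with rfl | rfl | rfl | ⟨j, hj1, hj2, rfl⟩
        · exact hm0
        · exact hm1
        · exact hmg
        · exact hmx j hj1 hj2
      refine ⟨cfin, ?_, ?_⟩
      · intro w
        by_cases hw : w ∈ Tset
        · rw [hcfin]; simp only [if_pos hw]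
          exact hL'sub _ (hmemT w hw)
        · rw [hcfin]; simp only [if_neg hw]
          exact hc01 w hw
      · intro w1 w2 hadj
        by_cases h1 : w1 ∈ Tset <;> by_cases h2 : w2 ∈ Tset
        · -- both in the theta
          rw [hcfin]; simp only [if_pos h1, if_pos h2]
          obtain ⟨hneadj, z, hz1, hz2⟩ := lineGraph_adj_iff_exists.1 hadj
          rcases hforms w1 h1 with rfl | rfl | rfl | ⟨j, hj1, hj2, rfl⟩ <;>
            rcases hforms w2 h2 with rfl | rfl | rfl | ⟨j', hj'1, hj'2, rfl⟩
          · exact absurd rfl hneadj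
          · exact hflip _ _ _ _ ct1
          · exact hflip _ _ _ _ ct2
          · -- x0 vs x j' : forces j' = i2
            rw [hx0Ev] at hz1
            rw [hxEv j' (by omega) (by omega)] at hz2
            have hsh := hShare 0 i2 (j'-1) j' z (by omega) hi2n (by omega) (by omega) hz1 hz2
            have hj'i2 : j' = i2 := by omega
            subst hj'i2
            exact hflip _ _ _ _ ct6
          · exact ct1
          · exact absurd rfl hneadj
          · exact ct3
          · -- x1 vs x j' : forces j' = 2
            rw [hx1Ev] at hz1
            rw [hxEv j' (by omega) (by omega)] at hz2
            have hsh := hShare 0 1 (j'-1) j' z (by omega) (by omega) (by omega) (by omega) hz1 hz2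
            have hj'2' : j' = 2 := by omega
            subst hj'2'
            exact ct4
          · exact ct2
          · exact hflip _ _ _ _ ct3
          · exact absurd rfl hneadj
          · -- g vs x j' : impossible
            rw [hgEv] at hz1
            rw [hxEv j' (by omega) (by omega)] at hz2
            have hsh := hShare 0 i3 (j'-1) j' z (by omega) hi3 (by omega) (by omega) hz1 hz2
            exfalso
            rcases hsh with h | h | h | h <;> omega
          · -- x j vs x0 : forces j = i2
            rw [hxEv j (by omega) (by omega)] at hz1
            rw [hx0Ev] at hz2
            have hsh := hShare (j-1) j 0 i2 z (by omega) (by omega) (by omega) hi2n hz1 hz2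
            have hji2 : j = i2 := by omega
            subst hji2
            exact ct6
          · -- x j vs x1 : forces j = 2
            rw [hxEv j (by omega) (by omega)] at hz1
            rw [hx1Ev] at hz2
            have hsh := hShare (j-1) j 0 1 z (by omega) (by omega) (by omega) (by omega) hz1 hz2
            have hj2' : j = 2 := by omega
            subst hj2'
            exact hflip _ _ _ _ ct4
          · -- x j vs g : impossible
            rw [hxEv j (by omega) (by omega)] at hz1
            rw [hgEv] at hz2
            have hsh := hShare (j-1) j 0 i3 z (by omega) (by omega) (by omega) hi3 hz1 hz2
            exfalso
            rcases hsh with h | h | h | h <;> omega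
          · -- x j vs x j'
            rw [hxEv j (by omega) (by omega)] at hz1
            rw [hxEv j' (by omega) (by omega)] at hz2
            have hsh := hShare (j-1) j (j'-1) j' z (by omega) (by omega) (by omega) (by omega)
              hz1 hz2
            have htri : j = j' ∨ j' = j + 1 ∨ j = j' + 1 := by omega
            rcases htri with h | h | h
            · subst h; exact absurd rfl hneadj
            · subst h; exact ct5 j hj1 (by omega)
            · subst h; exact hflip _ _ _ _ (ct5 j' hj'1 (by omega))
        · -- w1 ∈ T, w2 ∉ T
          rw [hcfin]; simp only [if_pos h1, if_neg h2]
          have hmem := hmemT w1 h1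
          simp only [hL'] at hmem
          obtain ⟨hmem1, hmem2⟩ := Finset.mem_sdiff.1 hmem
          apply hsub
          intro hh
          apply hmem2
          refine Finset.mem_image.2 ⟨w2, ?_, hh.symm⟩
          exact Finset.mem_sdiff.2 ⟨(SimpleGraph.mem_neighborFinset _ _ _).2 hadj, h2⟩
        · -- w1 ∉ T, w2 ∈ T
          rw [hcfin]; simp only [if_neg h1, if_pos h2]
          have hmem := hmemT w2 h2
          simp only [hL'] at hmem
          obtain ⟨hmem1, hmem2⟩ := Finset.mem_sdiff.1 hmem
          apply hflip
          apply hsub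
          intro hh
          apply hmem2
          refine Finset.mem_image.2 ⟨w1, ?_, hh.symm⟩
          exact Finset.mem_sdiff.2 ⟨(SimpleGraph.mem_neighborFinset _ _ _).2 hadj.symm, h1⟩
        · rw [hcfin]; simp only [if_neg h1, if_neg h2]
          exact hc02 w1 w2 h1 h2 hadj


  exact Nat.sInf_le hmem
end

section
/- For an even cycle C_{2n} (n ≥ 2), the group chromatic number χ_g(C_{2n}) equals 3, while the ordinary chromatic number χ(C_{2n}) equals 2; in particular χ_g(C_{2n}) > χ(C_{2n}). -/
open SimpleGraph

/-! Every cycle has maximum degree `2`, so a greedy colouring succeeds in any Abelian group of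
order at least `3`: each coloured neighbour `u` of the next vertex `a` forbids only the single
value `c u + f a u`. Conversely no cycle is `ℤ/2`-colourable: in `ℤ/2` the constraint
`c u - c v ≠ f u v` determines `c u` from `c v`, so going round the cycle the weights can be
chosen to make the colouring inconsistent. -/

theorem groupChromaticNumber_le {V : Type*} {G : SimpleGraph V} {m : ℕ}
    (h : ∀ (A : Type) [AddCommGroup A] [Fintype A], m ≤ Fintype.card A → IsGroupColorable G A) :
    groupChromaticNumber G ≤ m :=
  Nat.sInf_le h

theorem card_lt_groupChromaticNumber {V : Type*} {G : SimpleGraph V} {m : ℕ}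
    (h : ∀ (A : Type) [AddCommGroup A] [Fintype A], m ≤ Fintype.card A → IsGroupColorable G A)
    (A : Type) [AddCommGroup A] [Fintype A] (hA : ¬ IsGroupColorable G A) :
    Fintype.card A < groupChromaticNumber G := by
  by_contra! hle
  exact hA (Nat.sInf_mem (s := {m | ∀ (A : Type) [AddCommGroup A] [Fintype A],
    m ≤ Fintype.card A → IsGroupColorable G A}) ⟨m, h⟩ A hle)

theorem isGroupColorable_of_forall_degree_lt {V : Type*} [Fintype V] (G : SimpleGraph V)
    [DecidableRel G.Adj] (A : Type) [AddCommGroup A] [Fintype A]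
    (h : ∀ v, G.degree v < Fintype.card A) : IsGroupColorable G A := by
  classical
  intro f hf
  suffices ∀ s : Finset V, ∃ c : V → A, ∀ u ∈ s, ∀ v ∈ s, G.Adj u v → c u - c v ≠ f u v by
    obtain ⟨c, hc⟩ := this Finset.univ
    exact ⟨c, fun u v => hc u (Finset.mem_univ u) v (Finset.mem_univ v)⟩
  intro s
  induction s using Finset.induction_on with
  | empty => exact ⟨0, by simp⟩
  | insert a s ha ih =>
    obtain ⟨c, hc⟩ := ih
    obtain ⟨x, -, hx⟩ := Finset.exists_mem_notMem_of_card_lt_card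
      (s := (G.neighborFinset a).image (fun u => c u + f a u)) (t := Finset.univ)
      (Finset.card_image_le.trans_lt (h a))
    have hxa : ∀ u, G.Adj a u → x - c u ≠ f a u := fun u hau hxu =>
      hx (Finset.mem_image.2 ⟨u, (G.mem_neighborFinset a u).2 hau, by rw [← hxu]; abel⟩)
    have hne : ∀ u ∈ s, u ≠ a := fun u hu hua => ha (hua ▸ hu)
    refine ⟨Function.update c a x, fun u hu v hv huv => ?_⟩
    rw [Finset.mem_insert] at hu hv
    rcases hu with rfl | hu <;> rcases hv with rfl | hv
    · exact absurd huv G.irrefl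
    · simpa [Function.update_of_ne (hne v hv)] using hxa v huv
    · rw [Function.update_self, Function.update_of_ne (hne u hu), hf v u, ← neg_sub]
      exact fun h => hxa u huv.symm (neg_injective h)
    · simpa [Function.update_of_ne (hne u hu), Function.update_of_ne (hne v hv)] using
        hc u hu v hv huv

theorem cycleGraph_degree_le_two {N : ℕ} (v : Fin N) : (cycleGraph N).degree v ≤ 2 :=
  match N with
  | 0 | 1 => ((cycleGraph _).degree_lt_card_verts v).le.trans (by simp)
  | _ + 2 => cycleGraph_degree_two_le ▸ Finset.card_le_two

theorem cycleGraph_isGroupColorable {N : ℕ} {A : Type} [AddCommGroup A] [Fintype A]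
    (hA : 3 ≤ Fintype.card A) : IsGroupColorable (cycleGraph N) A :=
  isGroupColorable_of_forall_degree_lt _ A fun v => (cycleGraph_degree_le_two v).trans_lt hA

section NatCast

open Fin.NatCast Fin.CommRing

theorem cycleGraph_adj_natCast_succ {N : ℕ} [NeZero N] (hN : 2 ≤ N) (i : ℕ) :
    (cycleGraph N).Adj ((i + 1 : ℕ) : Fin N) (i : Fin N) := by
  obtain ⟨n, rfl⟩ : ∃ n, N = n + 2 := ⟨N - 2, by omega⟩
  rw [cycleGraph_adj]
  left
  push_cast
  ring

theorem cycleGraph_not_isGroupColorable_zmod_two {N : ℕ} (hN : 3 ≤ N) :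
    ¬ IsGroupColorable (cycleGraph N) (ZMod 2) := by
  -- Weight `0` on the path edges forces `c i = c 0 + i`; the closing edge then gets exactly the
  -- difference `N - 1` it forbids.
  have : NeZero N := ⟨by omega⟩
  have hval : ∀ i < N, ((i : Fin N) : ℕ) = i := fun i hi => by
    simp [Fin.val_natCast, Nat.mod_eq_of_lt hi]
  have hsub : ∀ a b x : ZMod 2, a - b ≠ x → a = b + x + 1 := by decide
  intro hcol
  obtain ⟨c, hc⟩ := hcol (fun u v =>
      if min u.val v.val = 0 ∧ max u.val v.val = N - 1 then ((N - 1 : ℕ) : ZMod 2) else 0)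
    (fun u v => by rw [ZMod.neg_eq_self_mod_two, min_comm, max_comm])
  have hpath : ∀ i < N, c i = c 0 + i := by
    intro i
    induction i with
    | zero => simp
    | succ i ih =>
      intro hi
      have hedge := hsub _ _ _ (hc _ _ (cycleGraph_adj_natCast_succ (by omega) i))
      rw [if_neg (by rw [hval _ hi, hval _ (by omega)]; omega), ih (by omega)] at hedge
      rw [hedge]
      push_cast
      ring
  have hwrap := hc _ _ (cycleGraph_adj_natCast_succ (by omega) (N - 1))
  rw [Nat.sub_add_cancel (by omega), Fin.natCast_self, if_pos (by simp [hval (N - 1) (by omega)]),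
    hpath (N - 1) (by omega)] at hwrap
  exact hwrap (by rw [sub_add_cancel_left, ZMod.neg_eq_self_mod_two])

end NatCast

/-- For an even cycle `C_{2n}` with `n ≥ 2`, the group chromatic number is `3` while the
ordinary chromatic number is `2`; in particular `χ_g(C_{2n}) > χ(C_{2n})`. -/
theorem groupChromaticNumber_evenCycle (n : ℕ) (hn : 2 ≤ n) :
    groupChromaticNumber (cycleGraph (2 * n)) = 3 ∧
      (cycleGraph (2 * n)).chromaticNumber = 2 ∧
      (cycleGraph (2 * n)).chromaticNumber <
        (groupChromaticNumber (cycleGraph (2 * n)) : ℕ∞) := by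
  have hcol : ∀ (A : Type) [AddCommGroup A] [Fintype A], 3 ≤ Fintype.card A →
      IsGroupColorable (cycleGraph (2 * n)) A := fun _ _ _ => cycleGraph_isGroupColorable
  have hgroup : groupChromaticNumber (cycleGraph (2 * n)) = 3 :=
    (groupChromaticNumber_le hcol).antisymm <| Nat.succ_le_of_lt <| by
      simpa using card_lt_groupChromaticNumber hcol (ZMod 2)
        (cycleGraph_not_isGroupColorable_zmod_two (by omega))
  have hchrom := chromaticNumber_cycleGraph_of_even (2 * n) (by omega) (even_two_mul n)
  refine ⟨hgroup, hchrom, ?_⟩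
  rw [hchrom, hgroup]
  norm_num
end

section
/- Let i be a nonnegative integer and let G be a group (Δ(G)+i)-edge-critical graph. Then the minimum degree satisfies δ(G) ≥ i + 2. -/
open SimpleGraph

/-- The maximum degree of a subgraph `H` of `G` (the degree of `v` in `H` is the
cardinality of its neighbor set in `H`). -/
noncomputable def subgraphMaxDegree {V : Type*} {G : SimpleGraph V} (H : G.Subgraph) : ℕ :=
  ⨆ v, (H.neighborSet v).ncard

/-- `G` is group `(Δ(G)+i)`-edge-critical: `χ'_gl(G) > Δ(G) + i`, but
`χ'_gl(H) ≤ Δ(H) + i` for every proper subgraph `H ⊂ G`. -/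
def IsGroupEdgeCritical {V : Type*} [Fintype V] (G : SimpleGraph V) [DecidableRel G.Adj]
    (i : ℕ) : Prop :=
  G.maxDegree + i < groupEdgeChoiceNumber G ∧
    ∀ H : G.Subgraph, H ≠ ⊤ → groupEdgeChoiceNumber H.coe ≤ subgraphMaxDegree H + i

/-!
Suppose some vertex `v` has degree at most `i + 1`. If `v` is isolated, deleting it does not
change the line graph, so the proper subgraph `G - v` already gives `χ'_gl(G) ≤ Δ(G) + i`.
Otherwise pick an edge `e = vu`. The proper subgraph `G - e` is `(Δ(G) + i)`-edge-choosable, and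
`e` meets at most `(d(v) - 1) + (d(u) - 1) ≤ i + Δ(G) - 1` other edges, each forbidding one
value on `e`; so a colouring of `G - e` extends greedily to `e`. Either way
`χ'_gl(G) ≤ Δ(G) + i`, contradicting criticality.
-/

section Choosable

variable {W W' : Type*} {G : SimpleGraph W} {G' : SimpleGraph W'} {k : ℕ}

theorem IsGroupChoosable.mono {k' : ℕ} (h : IsGroupChoosable G k) (hk : k ≤ k') :
    IsGroupChoosable G k' := by
  intro A _ _ hA L hL f hf
  choose L' hL'L hL'card using fun v ↦ Finset.exists_subset_card_eq ((hL v).symm ▸ hk)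
  obtain ⟨c, hcL, hc⟩ := h A (hk.trans hA) L' hL'card f hf
  exact ⟨c, fun v ↦ hL'L v (hcL v), hc⟩

theorem isGroupChoosable_of_isEmpty [IsEmpty W] : IsGroupChoosable G k :=
  fun _ _ _ _ _ _ _ _ ↦ ⟨isEmptyElim, isEmptyElim, fun u ↦ isEmptyElim u⟩

theorem IsGroupChoosable.of_isContained (hGG' : G ⊑ G') (h : IsGroupChoosable G' k) :
    IsGroupChoosable G k := by
  obtain ⟨φ⟩ := hGG'
  cases isEmpty_or_nonempty W
  · exact isGroupChoosable_of_isEmpty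
  intro A _ _ hA L hL f hf
  set ψ := Function.invFun φ
  have hψ : ∀ v, ψ (φ v) = v := Function.leftInverse_invFun φ.injective
  obtain ⟨c, hcL, hc⟩ :=
    h A hA (L ∘ ψ) (fun _ ↦ hL _) (fun x y ↦ f (ψ x) (ψ y)) fun _ _ ↦ hf _ _
  refine ⟨c ∘ φ, fun v ↦ by simpa only [Function.comp, hψ] using hcL (φ v), fun u v huv ↦ ?_⟩
  simpa only [Function.comp_apply, Copy.toHom_apply, hψ] using hc _ _ (φ.toHom.map_adj huv)

/-- Each neighbour `x` of `w` forbids only the value `c x + f w x` at `w`. -/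
theorem IsGroupChoosable.of_induce_compl_singleton (w : W) [Fintype (G.neighborSet w)]
    (hdeg : G.degree w < k) (h : IsGroupChoosable (G.induce {w}ᶜ) k) :
    IsGroupChoosable G k := by
  classical
  intro A _ _ hA L hL f hf
  obtain ⟨c', hc'L, hc'⟩ := h A hA (fun x ↦ L x) (fun _ ↦ hL _)
    (fun x y ↦ f x y) fun _ _ ↦ hf _ _
  set c₀ : W → A := fun x ↦ if hx : x = w then 0 else c' ⟨x, hx⟩
  have hc₀ : ∀ x (hx : x ≠ w), c₀ x = c' ⟨x, hx⟩ := fun x hx ↦ dif_neg hx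
  obtain ⟨z, hzL, hzF⟩ := Finset.exists_mem_notMem_of_card_lt_card
    (s := (G.neighborFinset w).image fun x ↦ c₀ x + f w x) (t := L w)
    (by rw [hL]; exact Finset.card_image_le.trans_lt hdeg)
  have hz : ∀ x, G.Adj w x → z - c₀ x ≠ f w x := fun x hx hzx ↦
    hzF (Finset.mem_image.2 ⟨x, (G.mem_neighborFinset w x).2 hx, by rw [← hzx]; abel⟩)
  refine ⟨Function.update c₀ w z, fun x ↦ ?_, fun x y hxy ↦ ?_⟩
  · rcases eq_or_ne x w with rfl | hx
    · simpa using hzL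
    · simpa [hx, hc₀ x hx] using hc'L ⟨x, hx⟩
  rcases eq_or_ne x w with rfl | hx
  · simpa [hxy.ne'] using hz y hxy
  rcases eq_or_ne y w with rfl | hy
  · simp only [Function.update_self, Function.update_of_ne hx]
    rw [ne_eq, ← neg_inj, neg_sub, ← hf]
    exact hz x hxy.symm
  simpa [hx, hy, hc₀ x hx, hc₀ y hy] using hc' ⟨x, hx⟩ ⟨y, hy⟩ hxy

theorem isGroupChoosable_of_card_le [Fintype W] (hW : Fintype.card W ≤ k) :
    IsGroupChoosable G k := by
  induction hn : Fintype.card W generalizing W with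
  | zero =>
    have := Fintype.card_eq_zero_iff.1 hn
    exact isGroupChoosable_of_isEmpty
  | succ n ih =>
    classical
    obtain ⟨w⟩ := (Fintype.card_pos_iff (α := W)).1 (by omega)
    have hcard : Fintype.card ({w}ᶜ : Set W) = n := by simp [Finset.filter_ne', hn]
    exact .of_induce_compl_singleton w ((G.degree_lt_card_verts w).trans_le hW)
      (ih (by omega) hcard)

/-- `groupChoiceNumber` is an `sInf`, which would be `0` for the empty set; finiteness of `W`
makes the set nonempty. -/
theorem IsGroupChoosable.of_groupChoiceNumber_le [Finite W] (h : groupChoiceNumber G ≤ k) :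
    IsGroupChoosable G k := by
  have := Fintype.ofFinite W
  have hne : {k | IsGroupChoosable G k}.Nonempty := ⟨_, isGroupChoosable_of_card_le le_rfl⟩
  exact (Nat.sInf_mem hne).mono h

end Choosable

namespace SimpleGraph

variable {V : Type*} {G : SimpleGraph V}

theorem Subgraph.induce_lineGraph_isContained (H : G.Subgraph) {S : Set G.edgeSet}
    (hS : ∀ e ∈ S, (e : Sym2 V) ∈ H.edgeSet) : G.lineGraph.induce S ⊑ H.coe.lineGraph := by
  set φ := H.coeCopy.toLineGraphEmbedding
  have hSφ : S ⊆ Set.range φ := by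
    rintro ⟨e, he⟩ heS
    induction e using Sym2.ind with
    | _ x y =>
      have hxy : H.Adj x y := hS _ heS
      exact ⟨⟨s(⟨x, H.edge_vert hxy⟩, ⟨y, H.edge_vert hxy.symm⟩), hxy⟩, rfl⟩
  exact (G.lineGraph.induceHomOfLE hSφ).toCopy.isContained.trans φ.isoInduceRange.isContained'

theorem degree_lineGraph_add_two_le [G.LocallyFinite] [DecidableEq V] {e : G.edgeSet}
    [Fintype (G.lineGraph.neighborSet e)] {u v : V} (he : (e : Sym2 V) = s(u, v)) :
    G.lineGraph.degree e + 2 ≤ G.degree u + G.degree v := by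
  have huv : G.Adj u v := by simpa [he] using e.2
  have hinc : ∀ {w} {e' : G.edgeSet}, w ∈ (e' : Sym2 V) → e' ≠ e →
      (e' : Sym2 V) ∈ (G.incidenceFinset w).erase e := fun {w e'} hw hne ↦
    Finset.mem_erase.2 ⟨fun h ↦ hne (Subtype.ext h), (G.mem_incidenceFinset _ _).2 ⟨e'.2, hw⟩⟩
  have hsub : ∀ e' ∈ G.lineGraph.neighborFinset e,
      (e' : Sym2 V) ∈ (G.incidenceFinset u).erase e ∪ (G.incidenceFinset v).erase e := by
    intro e' he'
    obtain ⟨hne, w, hwe, hwe'⟩ := lineGraph_adj_iff_exists.1 ((mem_neighborFinset _ _ _).1 he')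
    rw [he] at hwe
    rcases Sym2.mem_iff.1 hwe with rfl | rfl
    · exact Finset.mem_union_left _ (hinc hwe' hne.symm)
    · exact Finset.mem_union_right _ (hinc hwe' hne.symm)
  have hu : (e : Sym2 V) ∈ G.incidenceFinset u :=
    (G.mem_incidenceFinset _ _).2 ⟨e.2, by simp [he]⟩
  have hv : (e : Sym2 V) ∈ G.incidenceFinset v :=
    (G.mem_incidenceFinset _ _).2 ⟨e.2, by simp [he]⟩
  calc G.lineGraph.degree e + 2
      ≤ ((G.incidenceFinset u).erase e ∪ (G.incidenceFinset v).erase e).card + 2 := by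
        gcongr
        exact Finset.card_le_card_of_injOn _ hsub Subtype.val_injective.injOn
    _ ≤ (G.degree u - 1) + (G.degree v - 1) + 2 := by
        grw [Finset.card_union_le, Finset.card_erase_of_mem hu, Finset.card_erase_of_mem hv,
          card_incidenceFinset_eq_degree, card_incidenceFinset_eq_degree]
    _ = G.degree u + G.degree v := by
        have := G.degree_pos_iff_exists_adj u |>.2 ⟨v, huv⟩
        have := G.degree_pos_iff_exists_adj v |>.2 ⟨u, huv.symm⟩
        omega

end SimpleGraph

section EdgeChoosable

variable {V : Type*} {G : SimpleGraph V} {k : ℕ}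

theorem isGroupEdgeChoosable_of_deleteVerts_isolated {v : V} (hv : ∀ w, ¬G.Adj v w)
    (h : IsGroupEdgeChoosable ((⊤ : G.Subgraph).deleteVerts {v}).coe k) :
    IsGroupEdgeChoosable G k := by
  refine IsGroupChoosable.of_isContained ?_ h
  refine G.lineGraph.induceUnivIso.isContained'.trans (Subgraph.induce_lineGraph_isContained _ ?_)
  rintro ⟨e, he⟩ -
  induction e using Sym2.ind with
  | _ x y =>
    have hx : x ≠ v := by rintro rfl; exact hv y he
    have hy : y ≠ v := by rintro rfl; exact hv x he.symm
    simpa [hx, hy] using he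

theorem isGroupEdgeChoosable_of_deleteEdges_singleton [Fintype V] [DecidableRel G.Adj] {u v : V}
    (huv : G.Adj u v) (hdeg : G.degree u + G.degree v < k + 2)
    (h : IsGroupEdgeChoosable ((⊤ : G.Subgraph).deleteEdges {s(u, v)}).coe k) :
    IsGroupEdgeChoosable G k := by
  classical
  set e : G.edgeSet := ⟨s(u, v), huv⟩
  have hcontained :
      G.lineGraph.induce {e}ᶜ ⊑ ((⊤ : G.Subgraph).deleteEdges {s(u, v)}).coe.lineGraph := by
    refine Subgraph.induce_lineGraph_isContained _ ?_
    rintro ⟨e', he'G⟩ he'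
    induction e' using Sym2.ind with
    | _ x y => simpa [e, Subtype.ext_iff] using And.intro he'G he'
  refine IsGroupChoosable.of_induce_compl_singleton e ?_ (.of_isContained hcontained h)
  have := G.degree_lineGraph_add_two_le (e := e) rfl
  omega

theorem subgraphMaxDegree_le_maxDegree [Fintype V] [DecidableRel G.Adj] (H : G.Subgraph) :
    subgraphMaxDegree H ≤ G.maxDegree := by
  refine ciSup_le' fun x ↦ ?_
  calc (H.neighborSet x).ncard ≤ (G.neighborSet x).ncard :=
        Set.ncard_le_ncard (H.neighborSet_subset x) (Set.toFinite _)
    _ = G.degree x := by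
        rw [← card_neighborSet_eq_degree, Set.ncard_eq_toFinset_card', Set.toFinset_card]
    _ ≤ G.maxDegree := G.degree_le_maxDegree x

variable [Fintype V] [DecidableRel G.Adj] {i : ℕ}

theorem IsGroupEdgeCritical.not_isGroupEdgeChoosable (hG : IsGroupEdgeCritical G i) :
    ¬IsGroupEdgeChoosable G (G.maxDegree + i) :=
  fun h ↦ (Nat.sInf_le h).not_gt hG.1

theorem IsGroupEdgeCritical.isGroupEdgeChoosable_of_ne_top (hG : IsGroupEdgeCritical G i)
    {H : G.Subgraph} (hH : H ≠ ⊤) : IsGroupEdgeChoosable H.coe (G.maxDegree + i) :=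
  .of_groupChoiceNumber_le <| (hG.2 H hH).trans (by grw [subgraphMaxDegree_le_maxDegree])

end EdgeChoosable

/-- If `G` is group `(Δ(G)+i)`-edge-critical, then `δ(G) ≥ i + 2`. -/
theorem minDegree_of_isGroupEdgeCritical {V : Type*} [Fintype V]
    (G : SimpleGraph V) [DecidableRel G.Adj] (i : ℕ) (hG : IsGroupEdgeCritical G i) :
    i + 2 ≤ G.minDegree := by
  by_contra! hlt
  cases isEmpty_or_nonempty V
  · exact hG.not_isGroupEdgeChoosable (isGroupChoosable_of_card_le (by simp))
  obtain ⟨v, hv⟩ := G.exists_minimal_degree_vertex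
  rcases (G.degree v).eq_zero_or_pos with hv0 | hvpos
  · have hisol : ∀ w, ¬G.Adj v w := fun w hw ↦
      ((G.degree_pos_iff_exists_adj v).2 ⟨w, hw⟩).ne' hv0
    exact hG.not_isGroupEdgeChoosable <| isGroupEdgeChoosable_of_deleteVerts_isolated hisol <|
      hG.isGroupEdgeChoosable_of_ne_top fun h ↦ by simpa using congrArg (v ∈ ·.verts) h
  · obtain ⟨u, hvu⟩ := (G.degree_pos_iff_exists_adj v).1 hvpos
    have hdeg : G.degree v + G.degree u < G.maxDegree + i + 2 := by
      have := G.degree_le_maxDegree u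
      omega
    exact hG.not_isGroupEdgeChoosable <| isGroupEdgeChoosable_of_deleteEdges_singleton hvu hdeg <|
      hG.isGroupEdgeChoosable_of_ne_top fun h ↦ by simpa [hvu] using congrArg (·.Adj v u) h
end

section
/- Every 2-degenerate simple graph G is group (Δ(G)+1)-edge-choosable. -/
/-!
In a 2-degenerate graph every nonempty set `S` of edges contains an edge `vu` such that `v` lies
on at most two edges of `S`; then `vu` meets at most `1 + (Δ - 1) = Δ` other edges of `S`. So the
line graph is `Δ`-degenerate, and a `Δ`-degenerate graph is group `(Δ + 1)`-choosable greedily: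
the vertex `v` colored last has at most `Δ` forbidden values `c w + f v w` in its list of size
`Δ + 1`.
-/

open SimpleGraph

namespace SimpleGraph

section GreedyColoring

variable {W : Type*} {A : Type} [AddCommGroup A]

def IsGroupColoringOn (G : SimpleGraph W) (f : W → W → A) (c : W → A) (S : Set W) : Prop :=
  ∀ u ∈ S, ∀ w ∈ S, G.Adj u w → c u - c w ≠ f u w

lemma sub_ne_swap_of_antisymm {f : W → W → A} (hf : ∀ u v, f v u = -f u v) {x y : A}
    {u w : W} (h : x - y ≠ f u w) : y - x ≠ f w u := by
  rw [hf, ← neg_sub]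
  exact fun h' => h (neg_injective h')

lemma IsGroupColoringOn.exists_update_insert [Finite W] [DecidableEq W] {G : SimpleGraph W}
    {f : W → W → A} (hf : ∀ u v, f v u = -f u v) {c : W → A} {S : Set W}
    (hc : G.IsGroupColoringOn f c S) {v : W} {L : Finset A}
    (hv : (G.neighborSet v ∩ S).ncard < L.card) :
    ∃ a ∈ L, G.IsGroupColoringOn f (Function.update c v a) (insert v S) := by
  have hforbidden :
      ((fun w => c w + f v w) '' (G.neighborSet v ∩ S)).ncard < (L : Set A).ncard := by
    rw [Set.ncard_coe_finset]
    exact (Set.ncard_image_le (Set.toFinite _)).trans_lt hv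
  obtain ⟨a, haL, haF⟩ := Set.exists_mem_notMem_of_ncard_lt_ncard hforbidden (Set.toFinite _)
  have hfresh : ∀ w ∈ S, G.Adj v w → a - c w ≠ f v w := fun w hw hvw h =>
    haF ⟨w, ⟨hvw, hw⟩, show c w + f v w = a by rw [← h, add_sub_cancel]⟩
  refine ⟨a, haL, fun u hu w hw huw => ?_⟩
  by_cases huv : u = v
  · subst huv
    rw [Function.update_self, Function.update_of_ne huw.ne']
    exact hfresh w (hw.resolve_left huw.ne') huw
  by_cases hwv : w = v
  · subst hwv
    rw [Function.update_self, Function.update_of_ne huw.ne]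
    exact sub_ne_swap_of_antisymm hf (hfresh u (hu.resolve_left huv) huw.symm)
  rw [Function.update_of_ne huv, Function.update_of_ne hwv]
  exact hc u (hu.resolve_left huv) w (hw.resolve_left hwv) huw

theorem isGroupChoosable_of_forall_exists_ncard_lt [Finite W] (G : SimpleGraph W) {k : ℕ}
    (h : ∀ S : Finset W, S.Nonempty → ∃ v ∈ S, (G.neighborSet v ∩ S).ncard < k) :
    IsGroupChoosable G k := by
  classical
  intro A _ _ _ L hL f hf
  have hcolor : ∀ S : Finset W,
      ∃ c : W → A, (∀ v ∈ S, c v ∈ L v) ∧ G.IsGroupColoringOn f c S := by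
    intro S
    induction S using Finset.strongInduction with
    | H S ih =>
      rcases S.eq_empty_or_nonempty with rfl | hS
      · exact ⟨0, by simp, by simp [IsGroupColoringOn]⟩
      obtain ⟨v, hvS, hv⟩ := h S hS
      obtain ⟨c, hcL, hc⟩ := ih (S.erase v) (Finset.erase_ssubset hvS)
      have hv' : (G.neighborSet v ∩ ↑(S.erase v)).ncard < (L v).card := by
        rw [hL]
        exact (Set.ncard_le_ncard (by gcongr; exact Finset.erase_subset v S)).trans_lt hv
      obtain ⟨a, haL, ha⟩ := hc.exists_update_insert hf hv'
      rw [Finset.coe_erase, Set.insert_sdiff_singleton, Set.insert_eq_of_mem hvS] at ha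
      refine ⟨Function.update c v a, fun u hu => ?_, ha⟩
      by_cases huv : u = v
      · subst huv
        rwa [Function.update_self]
      · rw [Function.update_of_ne huv]
        exact hcL u (Finset.mem_erase.2 ⟨huv, hu⟩)
  have := Fintype.ofFinite W
  obtain ⟨c, hcL, hc⟩ := hcolor Finset.univ
  exact ⟨c, fun v => hcL v (Finset.mem_univ v), fun u w => hc u (by simp) w (by simp)⟩

end GreedyColoring

section LineGraph

variable {V : Type*} {G : SimpleGraph V}

def edgeInducedSubgraph (G : SimpleGraph V) (S : Set (Sym2 V)) : G.Subgraph where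
  verts := {x | ∃ y, G.Adj x y ∧ s(x, y) ∈ S}
  Adj x y := G.Adj x y ∧ s(x, y) ∈ S
  adj_sub h := h.1
  edge_vert h := ⟨_, h⟩
  symm := ⟨fun _ _ h => ⟨h.1.symm, Sym2.eq_swap ▸ h.2⟩⟩

lemma ncard_setOf_mem_le {S : Set G.edgeSet} {x : V} {N : Set V} (hN : N.Finite)
    (h : ∀ e ∈ S, ∀ y, (e : Sym2 V) = s(x, y) → y ∈ N) :
    {e ∈ S | x ∈ (e : Sym2 V)}.ncard ≤ N.ncard :=
  calc {e ∈ S | x ∈ (e : Sym2 V)}.ncard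
      = (Subtype.val '' {e ∈ S | x ∈ (e : Sym2 V)}).ncard :=
        (Set.ncard_image_of_injective _ Subtype.val_injective).symm
    _ ≤ ((fun y => s(x, y)) '' N).ncard := by
        refine Set.ncard_le_ncard ?_ (hN.image _)
        rintro _ ⟨e, ⟨he, hxe⟩, rfl⟩
        obtain ⟨y, hy⟩ := Sym2.mem_iff_exists.1 hxe
        exact ⟨y, h e he y hy, hy.symm⟩
    _ ≤ N.ncard := Set.ncard_image_le hN

lemma ncard_neighborSet_eq_degree [Fintype V] [DecidableRel G.Adj] (v : V) :
    (G.neighborSet v).ncard = G.degree v := by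
  rw [Set.ncard_eq_toFinset_card']
  exact G.card_neighborFinset_eq_degree v

/-- The neighbours of `e = vu` in `S` are the other edges of `S` at `v` (at most one) and at `u`
(at most `Δ(G) - 1`). -/
lemma ncard_lineGraph_neighborSet_inter_le [Fintype V] [DecidableRel G.Adj] {S : Set G.edgeSet}
    {e : G.edgeSet} (he : e ∈ S) {v u : V} (hvu : (e : Sym2 V) = s(v, u))
    (hv : {e' ∈ S | v ∈ (e' : Sym2 V)}.ncard ≤ 2) :
    (G.lineGraph.neighborSet e ∩ S).ncard ≤ G.maxDegree := by
  set edgesAt : V → Set G.edgeSet := fun x => {e' ∈ S | x ∈ (e' : Sym2 V)}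
  replace hv : (edgesAt v).ncard ≤ 2 := hv
  have hsub : G.lineGraph.neighborSet e ∩ S ⊆ (edgesAt v \ {e}) ∪ (edgesAt u \ {e}) := by
    rintro e' ⟨hee', he'⟩
    obtain ⟨hne, x, hxe, hxe'⟩ := lineGraph_adj_iff_exists.1 hee'
    rw [hvu, Sym2.mem_iff] at hxe
    rcases hxe with rfl | rfl
    · exact Or.inl ⟨⟨he', hxe'⟩, hne.symm⟩
    · exact Or.inr ⟨⟨he', hxe'⟩, hne.symm⟩
  have hu : (edgesAt u).ncard ≤ G.maxDegree :=
    calc (edgesAt u).ncard ≤ (G.neighborSet u).ncard :=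
          ncard_setOf_mem_le (Set.toFinite _) fun e' _ y hy => G.mem_edgeSet.1 (hy ▸ e'.2)
      _ = G.degree u := ncard_neighborSet_eq_degree u
      _ ≤ G.maxDegree := G.degree_le_maxDegree u
  have hev : e ∈ edgesAt v := ⟨he, hvu ▸ Sym2.mem_mk_left v u⟩
  have heu : e ∈ edgesAt u := ⟨he, hvu ▸ Sym2.mem_mk_right v u⟩
  have hu_pos : 0 < (edgesAt u).ncard := (Set.ncard_pos (Set.toFinite _)).2 ⟨e, heu⟩
  calc (G.lineGraph.neighborSet e ∩ S).ncard
      ≤ ((edgesAt v \ {e}) ∪ (edgesAt u \ {e})).ncard := Set.ncard_le_ncard hsub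
    _ ≤ (edgesAt v \ {e}).ncard + (edgesAt u \ {e}).ncard := Set.ncard_union_le _ _
    _ = ((edgesAt v).ncard - 1) + ((edgesAt u).ncard - 1) := by
        rw [Set.ncard_sdiff_singleton_of_mem hev, Set.ncard_sdiff_singleton_of_mem heu]
    _ ≤ G.maxDegree := by omega

lemma exists_ncard_lineGraph_neighborSet_inter_le [Fintype V] [DecidableRel G.Adj]
    (hdeg : ∀ H : G.Subgraph, H.verts.Nonempty → ∃ v ∈ H.verts, (H.neighborSet v).ncard ≤ 2)
    {S : Set G.edgeSet} (hS : S.Nonempty) :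
    ∃ e ∈ S, (G.lineGraph.neighborSet e ∩ S).ncard ≤ G.maxDegree := by
  set H := G.edgeInducedSubgraph (Subtype.val '' S)
  have hH : H.verts.Nonempty := by
    obtain ⟨e, he⟩ := hS
    obtain ⟨a, b, hab⟩ := Sym2.exists.1 ⟨(e : Sym2 V), rfl⟩
    exact ⟨a, b, G.mem_edgeSet.1 (hab ▸ e.2), e, he, hab⟩
  obtain ⟨v, ⟨u, -, e, he, hvu⟩, hv⟩ := hdeg H hH
  refine ⟨e, he, ncard_lineGraph_neighborSet_inter_le he hvu ?_⟩
  calc {e' ∈ S | v ∈ (e' : Sym2 V)}.ncard ≤ (H.neighborSet v).ncard :=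
        ncard_setOf_mem_le (Set.toFinite _) fun e' he' y hy =>
          ⟨G.mem_edgeSet.1 (hy ▸ e'.2), e', he', hy⟩
    _ ≤ 2 := hv

end LineGraph

end SimpleGraph

/-- Every 2-degenerate simple graph (every subgraph has a vertex of degree at most 2)
is group `(Δ(G)+1)`-edge-choosable. -/
theorem isGroupEdgeChoosable_of_twoDegenerate {V : Type*} [Fintype V]
    (G : SimpleGraph V) [DecidableRel G.Adj]
    (hdeg : ∀ H : G.Subgraph, H.verts.Nonempty → ∃ v ∈ H.verts, (H.neighborSet v).ncard ≤ 2) :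
    IsGroupEdgeChoosable G (G.maxDegree + 1) :=
  isGroupChoosable_of_forall_exists_ncard_lt G.lineGraph fun _ hS =>
    (G.exists_ncard_lineGraph_neighborSet_inter_le hdeg (Finset.coe_nonempty.2 hS)).imp
      fun _ ⟨he, hle⟩ => ⟨he, Nat.lt_succ_of_le hle⟩
end

section
/- Let i be a nonnegative integer and G a simple graph containing an edge uv with d_G(u) + d_G(v) ≤ Δ(G) + i + 1. If the graph G − uv obtained by deleting the edge uv is group (Δ(G)+i)-edge-choosable, then G itself is group (Δ(G)+i)-edge-choosable. -/
open SimpleGraph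

/-- If `G` has an edge `uv` with `d_G(u) + d_G(v) ≤ Δ(G) + i + 1` and `G - uv` is group
`(Δ(G)+i)`-edge-choosable, then so is `G`. -/
theorem isGroupEdgeChoosable_of_deleteEdge {V : Type*} [Fintype V]
    (G : SimpleGraph V) [DecidableRel G.Adj] (i : ℕ) (u v : V) (huv : G.Adj u v)
    (hdeg : G.degree u + G.degree v ≤ G.maxDegree + i + 1)
    (hdel : IsGroupEdgeChoosable (G.deleteEdges {s(u, v)}) (G.maxDegree + i)) :
    IsGroupEdgeChoosable G (G.maxDegree + i) := by
  classical
  intro A _ _ hA L hL f hf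
  set k := G.maxDegree + i with hk
  -- the deleted graph
  set G' := G.deleteEdges {s(u, v)} with hG'
  have hsub : ∀ e : Sym2 V, e ∈ G'.edgeSet → e ∈ G.edgeSet := by
    intro e he
    rw [hG', edgeSet_deleteEdges] at he
    exact he.1
  let ι : G'.edgeSet → G.edgeSet := fun e => ⟨e.1, hsub e.1 e.2⟩
  obtain ⟨c', hc'L, hc'adj⟩ := hdel A hA (fun e => L (ι e)) (fun e => hL _)
    (fun e e' => f (ι e) (ι e')) (fun e e' => hf _ _)
  let euv : G.edgeSet := ⟨s(u, v), huv⟩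
  -- extend c' to all edges of G (value at euv fixed later)
  let c0 : G.edgeSet → A := fun e =>
    if h : (e : Sym2 V) ∈ G'.edgeSet then c' ⟨e.1, h⟩ else 0
  have hmem' : ∀ e : G.edgeSet, e ≠ euv → (e : Sym2 V) ∈ G'.edgeSet := by
    intro e he
    rw [hG', edgeSet_deleteEdges]
    refine ⟨e.2, ?_⟩
    simpa [euv, Subtype.ext_iff] using he
  have hc0 : ∀ (e : G.edgeSet) (h : e ≠ euv), c0 e = c' ⟨e.1, hmem' e h⟩ := by
    intro e h
    simp [c0, hmem' e h]
  -- the set of edges adjacent to euv in the line graph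
  let S : Finset G.edgeSet := Finset.univ.filter (fun e => G.lineGraph.Adj euv e)
  have hScard : S.card < k := by
    have h1 : S.image (Subtype.val) ⊆
        ((G.incidenceFinset u ∪ G.incidenceFinset v).erase s(u, v)) := by
      intro e he
      simp only [Finset.mem_image] at he
      obtain ⟨e', he', rfl⟩ := he
      simp only [S, Finset.mem_filter] at he'
      obtain ⟨-, hne, hw⟩ := he'
      obtain ⟨w, hw1, hw2⟩ := hw
      refine Finset.mem_erase.2 ⟨?_, ?_⟩
      · simpa [euv, Subtype.ext_iff, eq_comm] using hne
      · rcases Sym2.mem_iff.1 hw1 with rfl | rfl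
        · exact Finset.mem_union_left _
            (by rw [mem_incidenceFinset]; exact ⟨e'.2, hw2⟩)
        · exact Finset.mem_union_right _
            (by rw [mem_incidenceFinset]; exact ⟨e'.2, hw2⟩)
    have h2 : S.card ≤ ((G.incidenceFinset u ∪ G.incidenceFinset v).erase s(u, v)).card :=
      le_trans (le_of_eq (Finset.card_image_of_injective _ Subtype.val_injective).symm)
        (Finset.card_le_card h1)
    have huvmem : s(u, v) ∈ G.incidenceFinset u ∩ G.incidenceFinset v := by
      refine Finset.mem_inter.2 ⟨?_, ?_⟩ <;> rw [mem_incidenceFinset] <;>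
        exact ⟨huv, by simp⟩
    have hinter : 1 ≤ (G.incidenceFinset u ∩ G.incidenceFinset v).card :=
      Finset.card_pos.2 ⟨_, huvmem⟩
    have hun : (G.incidenceFinset u ∪ G.incidenceFinset v).card
        + (G.incidenceFinset u ∩ G.incidenceFinset v).card
        = G.degree u + G.degree v := by
      rw [Finset.card_union_add_card_inter, G.card_incidenceFinset_eq_degree,
        G.card_incidenceFinset_eq_degree]
    have her : ((G.incidenceFinset u ∪ G.incidenceFinset v).erase s(u, v)).card + 1
        = (G.incidenceFinset u ∪ G.incidenceFinset v).card := by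
      rw [Finset.card_erase_add_one]
      exact Finset.mem_union_left _ (Finset.mem_inter.1 huvmem).1
    omega
  -- choose a value for euv
  let F : Finset A := S.image (fun e => f euv e + c0 e)
  have hFcard : F.card < (L euv).card := by
    rw [hL euv]
    exact lt_of_le_of_lt (Finset.card_image_le) hScard
  obtain ⟨a, haL, haF⟩ : ∃ a ∈ L euv, a ∉ F := by
    have : (L euv \ F).Nonempty := by
      apply Finset.card_pos.1
      have := Finset.le_card_sdiff F (L euv)
      omega
    obtain ⟨a, ha⟩ := this
    exact ⟨a, (Finset.mem_sdiff.1 ha).1, (Finset.mem_sdiff.1 ha).2⟩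
  refine ⟨fun e => if e = euv then a else c0 e, ?_, ?_⟩
  · intro e
    by_cases h : e = euv
    · subst h; simpa using haL
    · have := hc'L ⟨e.1, hmem' e h⟩
      simpa [h, hc0 e h, ι] using this
  · intro e₁ e₂ hadj
    show (if e₁ = euv then a else c0 e₁) - (if e₂ = euv then a else c0 e₂) ≠ f e₁ e₂
    have hne : e₁ ≠ e₂ := hadj.1
    have key : ∀ e : G.edgeSet, G.lineGraph.Adj euv e → a - c0 e ≠ f euv e := by
      intro e he
      have heS : e ∈ S := Finset.mem_filter.2 ⟨Finset.mem_univ _, he⟩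
      intro hcon
      exact haF (Finset.mem_image.2 ⟨e, heS, by rw [← hcon]; abel⟩)
    by_cases h1 : e₁ = euv
    · have h2 : e₂ ≠ euv := fun h => hne (h1.trans h.symm)
      rw [if_pos h1, if_neg h2, h1]
      exact key e₂ (h1 ▸ hadj)
    · by_cases h2 : e₂ = euv
      · rw [if_neg h1, if_pos h2]
        have hk2 := key e₁ (h2 ▸ hadj.symm)
        intro hcon
        apply hk2
        have hab : a - c0 e₁ = -(c0 e₁ - a) := by abel
        rw [hab, hcon, h2, hf e₁ euv]
      · -- both edges in G'
        have hadj' : G'.lineGraph.Adj ⟨e₁.1, hmem' e₁ h1⟩ ⟨e₂.1, hmem' e₂ h2⟩ := by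
          refine ⟨?_, ?_⟩
          · simp only [ne_eq, Subtype.mk.injEq]
            intro h; exact hne (Subtype.ext h)
          · exact hadj.2
        have := hc'adj _ _ hadj'
        simpa [if_neg h1, if_neg h2, hc0 e₁ h1, hc0 e₂ h2, ι] using this
end
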